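/- arXiv:2409.01796 — 5 statements merged into one kernel-verified Lean document; each statement's English description precedes it below -/
import Mathlib

section
/- If G is a finite simple graph of order n and G̅ is its complement, then b^A_g(G) + b^I_g(G̅) = ⌊n/2⌋. -/
open SimpleGraph

/-- The balance score of a state `(S0, S1)` in a graph `G`: the number of edges of `G` with
one endpoint in `S0` and the other in `S1`, minus the number of edges with both endpoints
in `S0` or both endpoints in `S1`. -/
noncomputable def bscore {V : Type*} (G : SimpleGraph V) (S0 S1 : Set V) : ℤ :=
  ({e ∈ G.edgeSet | ∃ u ∈ S0, ∃ v ∈ S1, e = s(u, v)}.ncard : ℤ) -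
  ({e ∈ G.edgeSet | (∃ u ∈ S0, ∃ v ∈ S0, e = s(u, v)) ∨
      (∃ u ∈ S1, ∃ v ∈ S1, e = s(u, v))}.ncard : ℤ)

/-- The value of the balance game computed by backward induction, with `k` moves remaining.
`t = true` means it is Admirable's (the minimizer's) turn, `t = false` means it is
Impish's (the maximizer's) turn.  `S0` is the set of vertices selected by Admirable so far,
`S1` the set selected by Impish. -/
noncomputable def gameVal {V : Type*} [Fintype V] (G : SimpleGraph V) :
    ℕ → Bool → Finset V → Finset V → ℤ
  | 0, _, S0, S1 => bscore G ↑S0 ↑S1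
  | (k + 1), t, S0, S1 =>
    letI := Classical.decEq V
    if h : (Finset.univ \ (S0 ∪ S1)).Nonempty then
      if t then (Finset.univ \ (S0 ∪ S1)).inf' h fun v => gameVal G k false (insert v S0) S1
      else (Finset.univ \ (S0 ∪ S1)).sup' h fun v => gameVal G k true S0 (insert v S1)
    else bscore G ↑S0 ↑S1

/-- The (A)-start game balance number `b^A_g(G)`. -/
noncomputable def balA {V : Type*} [Fintype V] (G : SimpleGraph V) : ℤ :=
  gameVal G (Fintype.card V) true ∅ ∅

/-- The (I)-start game balance number `b^I_g(G)`. -/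
noncomputable def balI {V : Type*} [Fintype V] (G : SimpleGraph V) : ℤ :=
  gameVal G (Fintype.card V) false ∅ ∅

/-- The value of the cordiality game computed by backward induction (final score is
`|bscore|`), with `k` moves remaining; `t = true` means it is Admirable's turn. -/
noncomputable def cordVal {V : Type*} [Fintype V] (G : SimpleGraph V) :
    ℕ → Bool → Finset V → Finset V → ℤ
  | 0, _, S0, S1 => |bscore G ↑S0 ↑S1|
  | (k + 1), t, S0, S1 =>
    letI := Classical.decEq V
    if h : (Finset.univ \ (S0 ∪ S1)).Nonempty then
      if t then (Finset.univ \ (S0 ∪ S1)).inf' h fun v => cordVal G k false (insert v S0) S1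
      else (Finset.univ \ (S0 ∪ S1)).sup' h fun v => cordVal G k true S0 (insert v S1)
    else |bscore G ↑S0 ↑S1|

/-- The (A)-start game cordiality number `c^A_g(G)`. -/
noncomputable def cordA {V : Type*} [Fintype V] (G : SimpleGraph V) : ℤ :=
  cordVal G (Fintype.card V) true ∅ ∅

/-- The (I)-start game cordiality number `c^I_g(G)`. -/
noncomputable def cordI {V : Type*} [Fintype V] (G : SimpleGraph V) : ℤ :=
  cordVal G (Fintype.card V) false ∅ ∅

/-!
The scores of a pair of disjoint sets `(S₀, S₁)` in `G` and in its complement add up to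
`|S₀| |S₁| - C(|S₀|, 2) - C(|S₁|, 2)`, the score in the complete graph, which depends only on
`|S₀|` and `|S₁|`. Compare the game on `G` with the game on `Gᶜ` in which the roles are
exchanged, so that Admirable's vertices in `G` are Impish's vertices in `Gᶜ`. Along any play the
sizes of the two sets are fixed by the number of moves, so the final scores of the two games
always have the same sum; minimizing one is maximizing the other, and by backward induction the
game values have that sum too. With `n` vertices the first player gets `⌈n/2⌉` vertices and the
second `⌊n/2⌋`, and then the sum is `⌊n/2⌋`.
-/

open Finset

def sizeScore (a b : ℕ) : ℤ := a * b - a.choose 2 - b.choose 2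

lemma sizeScore_comm (a b : ℕ) : sizeScore a b = sizeScore b a := by
  unfold sizeScore
  ring

lemma two_mul_sizeScore (a b : ℕ) : 2 * sizeScore a b = a + b - (a - b : ℤ) ^ 2 := by
  rw [← Int.cast_inj (α := ℚ)]
  push_cast [sizeScore, Nat.cast_choose_two]
  ring

lemma sizeScore_half (n : ℕ) : sizeScore ((n + 1) / 2) (n / 2) = (n / 2 : ℕ) := by
  have h := two_mul_sizeScore ((n + 1) / 2) (n / 2)
  rcases Nat.even_or_odd' n with ⟨m, rfl | rfl⟩
  · rw [show (2 * m + 1) / 2 = m by omega, show 2 * m / 2 = m by omega] at *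
    linarith
  · rw [show (2 * m + 1 + 1) / 2 = m + 1 by omega, show (2 * m + 1) / 2 = m by omega] at *
    push_cast at h
    linarith

section Score

variable {V : Type*}

lemma ncard_sep_edgeSet_sup [Finite V] {G H : SimpleGraph V} (hGH : Disjoint G H)
    (p : Sym2 V → Prop) :
    {e ∈ (G ⊔ H).edgeSet | p e}.ncard =
      {e ∈ G.edgeSet | p e}.ncard + {e ∈ H.edgeSet | p e}.ncard := by
  have hsplit : {e ∈ (G ⊔ H).edgeSet | p e} = {e ∈ G.edgeSet | p e} ∪ {e ∈ H.edgeSet | p e} := by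
    rw [edgeSet_sup]
    exact Set.sep_union
  rw [hsplit]
  exact Set.ncard_union_eq
    ((disjoint_edgeSet.2 hGH).mono (Set.sep_subset _ _) (Set.sep_subset _ _))

lemma bscore_comm (G : SimpleGraph V) (S0 S1 : Set V) : bscore G S1 S0 = bscore G S0 S1 := by
  have cross : ∀ e : Sym2 V,
      (∃ u ∈ S1, ∃ v ∈ S0, e = s(u, v)) ↔ ∃ u ∈ S0, ∃ v ∈ S1, e = s(u, v) :=
    fun e => ⟨fun ⟨u, hu, v, hv, he⟩ => ⟨v, hv, u, hu, he.trans Sym2.eq_swap⟩,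
      fun ⟨u, hu, v, hv, he⟩ => ⟨v, hv, u, hu, he.trans Sym2.eq_swap⟩⟩
  simp only [bscore, cross, or_comm]

lemma bscore_sup [Finite V] {G H : SimpleGraph V} (hGH : Disjoint G H) (S0 S1 : Set V) :
    bscore (G ⊔ H) S0 S1 = bscore G S0 S1 + bscore H S0 S1 := by
  simp only [bscore, ncard_sep_edgeSet_sup hGH]
  push_cast
  ring

lemma bscore_add_bscore_compl [Finite V] (G : SimpleGraph V) (S0 S1 : Set V) :
    bscore G S0 S1 + bscore Gᶜ S0 S1 = bscore ⊤ S0 S1 := by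
  rw [← bscore_sup disjoint_compl_right, sup_compl_eq_top]

lemma edgeSet_top_sep_cross [DecidableEq V] {S0 S1 : Finset V} (h : Disjoint S0 S1) :
    {e ∈ (⊤ : SimpleGraph V).edgeSet | ∃ u ∈ (S0 : Set V), ∃ v ∈ (S1 : Set V), e = s(u, v)} =
      ↑((S0 ×ˢ S1).image Sym2.mk.uncurry) := by
  ext e
  simp only [edgeSet_top, Set.mem_ofPred_eq, Set.mem_compl_iff, Sym2.mem_diagSet, mem_coe,
    coe_image, Set.mem_image, mem_product, Prod.exists, Function.uncurry_apply_pair]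
  constructor
  · rintro ⟨-, u, hu, v, hv, rfl⟩
    exact ⟨u, v, ⟨hu, hv⟩, rfl⟩
  · rintro ⟨u, v, ⟨hu, hv⟩, rfl⟩
    exact ⟨fun huv => Finset.disjoint_left.1 h hu (Sym2.mk_isDiag_iff.1 huv ▸ hv),
      u, hu, v, hv, rfl⟩

lemma edgeSet_top_sep_within [DecidableEq V] (S : Finset V) :
    {e ∈ (⊤ : SimpleGraph V).edgeSet | ∃ u ∈ (S : Set V), ∃ v ∈ (S : Set V), e = s(u, v)} =
      ↑(S.offDiag.image Sym2.mk.uncurry) := by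
  ext e
  simp only [edgeSet_top, Set.mem_ofPred_eq, Set.mem_compl_iff, Sym2.mem_diagSet, mem_coe,
    coe_image, Set.mem_image, mem_offDiag, Prod.exists, Function.uncurry_apply_pair]
  constructor
  · rintro ⟨hdiag, u, hu, v, hv, rfl⟩
    exact ⟨u, v, ⟨hu, hv, fun huv => hdiag (Sym2.mk_isDiag_iff.2 huv)⟩, rfl⟩
  · rintro ⟨u, v, ⟨hu, hv, huv⟩, rfl⟩
    exact ⟨Sym2.mk_isDiag_iff.not.2 huv, u, hu, v, hv, rfl⟩

lemma card_image_mk_product [DecidableEq V] {S0 S1 : Finset V} (h : Disjoint S0 S1) :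
    #((S0 ×ˢ S1).image Sym2.mk.uncurry) = #S0 * #S1 := by
  rw [card_image_of_injOn, card_product]
  rintro ⟨a, b⟩ hab ⟨c, d⟩ hcd heq
  simp only [coe_product, Set.mem_prod, mem_coe] at hab hcd
  obtain ⟨rfl, rfl⟩ | ⟨rfl, rfl⟩ := Sym2.eq_iff.1 heq
  · rfl
  · exact absurd hcd.2 (Finset.disjoint_left.1 h hab.1)

lemma disjoint_image_mk_offDiag [DecidableEq V] {S0 S1 : Finset V} (h : Disjoint S0 S1) :
    Disjoint (S0.offDiag.image Sym2.mk.uncurry) (S1.offDiag.image Sym2.mk.uncurry) := by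
  simp only [Finset.disjoint_left, mem_image, mem_offDiag, Prod.exists,
    Function.uncurry_apply_pair]
  rintro _ ⟨a, b, ⟨ha, -, -⟩, rfl⟩ ⟨c, d, ⟨hc, hd, -⟩, heq⟩
  obtain ⟨rfl, -⟩ | ⟨-, rfl⟩ := Sym2.eq_iff.1 heq
  · exact Finset.disjoint_left.1 h ha hc
  · exact Finset.disjoint_left.1 h ha hd

lemma bscore_top {S0 S1 : Finset V} (h : Disjoint S0 S1) :
    bscore ⊤ (S0 : Set V) S1 = sizeScore #S0 #S1 := by
  classical
  rw [bscore, Set.sep_or, edgeSet_top_sep_cross h, edgeSet_top_sep_within, edgeSet_top_sep_within,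
    ← coe_union, Set.ncard_coe_finset, Set.ncard_coe_finset,
    card_union_of_disjoint (disjoint_image_mk_offDiag h), card_image_mk_product h,
    Sym2.card_image_offDiag, Sym2.card_image_offDiag, sizeScore]
  push_cast
  ring

end Score

lemma Finset.inf'_add_sup'_eq {ι α : Type*} [AddCommMonoid α] [LinearOrder α]
    [IsOrderedAddMonoid α]
    {s : Finset ι} (hs : s.Nonempty) {f g : ι → α} {c : α} (hfg : ∀ i ∈ s, f i + g i = c) :
    s.inf' hs f + s.sup' hs g = c := by
  obtain ⟨i, hi, hfi⟩ := exists_mem_eq_inf' hs f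
  obtain ⟨j, hj, hgj⟩ := exists_mem_eq_sup' hs g
  rw [hfi, hgj]
  apply le_antisymm
  · calc f i + g j ≤ f j + g j := add_le_add_left (hfi ▸ inf'_le f hj) _
      _ = c := hfg j hj
  · calc c = f i + g i := (hfg i hi).symm
      _ ≤ f i + g j := add_le_add_right (hgj ▸ le_sup' g hi) _

/-- How many of `k` alternating moves fall to the player who moves first iff `t`. -/
def movesOf (t : Bool) (k : ℕ) : ℕ := if t then (k + 1) / 2 else k / 2

lemma movesOf_succ_true (k : ℕ) : movesOf true (k + 1) = movesOf false k + 1 := by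
  show (k + 1 + 1) / 2 = k / 2 + 1
  omega

lemma movesOf_succ_false (k : ℕ) : movesOf false (k + 1) = movesOf true k := rfl

section Game

variable {V : Type*} [Fintype V] [DecidableEq V]

lemma gameVal_succ_true (G : SimpleGraph V) (k : ℕ) {S0 S1 : Finset V}
    (h : (univ \ (S0 ∪ S1)).Nonempty) :
    gameVal G (k + 1) true S0 S1 =
      (univ \ (S0 ∪ S1)).inf' h fun v => gameVal G k false (insert v S0) S1 := by
  -- `gameVal` is defined with `Classical.decEq V`
  obtain rfl : ‹DecidableEq V› = Classical.decEq V := Subsingleton.elim _ _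
  rw [gameVal, dif_pos h, if_pos rfl]

lemma gameVal_succ_false (G : SimpleGraph V) (k : ℕ) {S0 S1 : Finset V}
    (h : (univ \ (S0 ∪ S1)).Nonempty) :
    gameVal G (k + 1) false S0 S1 =
      (univ \ (S0 ∪ S1)).sup' h fun v => gameVal G k true S0 (insert v S1) := by
  obtain rfl : ‹DecidableEq V› = Classical.decEq V := Subsingleton.elim _ _
  rw [gameVal, dif_pos h, if_neg Bool.false_ne_true]

lemma card_sdiff_insert_union {S0 S1 : Finset V} {k : ℕ} (hk : #(univ \ (S0 ∪ S1)) = k + 1)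
    {v : V} (hv : v ∈ univ \ (S0 ∪ S1)) : #(univ \ (insert v S0 ∪ S1)) = k := by
  rw [insert_union, sdiff_insert, card_erase_of_mem hv, hk, Nat.add_sub_cancel]

theorem gameVal_add_gameVal_compl (k : ℕ) :
    ∀ (G : SimpleGraph V) (t : Bool) (S0 S1 : Finset V), Disjoint S0 S1 →
      #(univ \ (S0 ∪ S1)) = k →
      gameVal G k t S0 S1 + gameVal Gᶜ k (!t) S1 S0 =
        sizeScore (#S0 + movesOf t k) (#S1 + movesOf (!t) k) := by
  induction k with
  | zero =>
    intro G t S0 S1 hd _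
    rw [gameVal, gameVal, bscore_comm Gᶜ, bscore_add_bscore_compl, bscore_top hd]
    cases t <;> rfl
  | succ k ih =>
    have hA : ∀ (G : SimpleGraph V) (S0 S1 : Finset V), Disjoint S0 S1 →
        #(univ \ (S0 ∪ S1)) = k + 1 →
        gameVal G (k + 1) true S0 S1 + gameVal Gᶜ (k + 1) false S1 S0 =
          sizeScore (#S0 + movesOf true (k + 1)) (#S1 + movesOf false (k + 1)) := by
      intro G S0 S1 hd hk
      have hR : (univ \ (S0 ∪ S1)).Nonempty := card_pos.1 (hk ▸ k.succ_pos)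
      rw [gameVal_succ_true G k hR, gameVal_succ_false Gᶜ k (union_comm S0 S1 ▸ hR)]
      simp only [union_comm S1 S0]
      refine inf'_add_sup'_eq hR fun v hv => ?_
      have hv' : v ∉ S0 ∧ v ∉ S1 := by simpa [not_or] using hv
      rw [movesOf_succ_true, movesOf_succ_false, ← add_assoc, add_right_comm,
        ← card_insert_of_notMem hv'.1]
      exact ih G false (insert v S0) S1 (disjoint_insert_left.2 ⟨hv'.2, hd⟩)
        (card_sdiff_insert_union hk hv)
    intro G t S0 S1 hd hk
    cases t with
    | true => exact hA G S0 S1 hd hk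
    | false =>
      -- this is the case `t = true` for `Gᶜ`, with the two sets exchanged
      have h := hA Gᶜ S1 S0 hd.symm (by rwa [union_comm])
      rw [compl_compl] at h
      rw [Bool.not_false, add_comm, h, sizeScore_comm]

end Game

theorem statement_1 {V : Type*} [Fintype V] (G : SimpleGraph V) :
    balA G + balI Gᶜ = ((Fintype.card V / 2 : ℕ) : ℤ) := by
  classical
  have h :=
    gameVal_add_gameVal_compl (Fintype.card V) G true ∅ ∅ (disjoint_empty_left ∅) (by simp)
  simp only [Bool.not_true, card_empty, zero_add] at h
  rw [balA, balI, h]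
  exact sizeScore_half _
end

section
/- Let G be a finite simple graph of order n with maximum degree Δ. If n is even, then b^A_g(G) ≤ b^I_g(G) ≤ b^A_g(G) + 4Δ. If n is odd, then b^A_g(G) − 2Δ ≤ b^I_g(G) ≤ b^A_g(G) + 2Δ. -/
open SimpleGraph

attribute [local instance] Classical.decEq

open Finset

section Aux

variable {V : Type*} [Fintype V] (G : SimpleGraph V)

lemma gameVal_zero (t : Bool) (S0 S1 : Finset V) :
    gameVal G 0 t S0 S1 = bscore G ↑S0 ↑S1 := rfl

lemma gameVal_true_eq {k : ℕ} {S0 S1 : Finset V} (h : (Finset.univ \ (S0 ∪ S1)).Nonempty) :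
    gameVal G (k+1) true S0 S1
      = (Finset.univ \ (S0 ∪ S1)).inf' h fun v => gameVal G k false (insert v S0) S1 := by
  rw [gameVal, dif_pos h]; simp

lemma gameVal_false_eq {k : ℕ} {S0 S1 : Finset V} (h : (Finset.univ \ (S0 ∪ S1)).Nonempty) :
    gameVal G (k+1) false S0 S1
      = (Finset.univ \ (S0 ∪ S1)).sup' h fun v => gameVal G k true S0 (insert v S1) := by
  rw [gameVal, dif_pos h]; simp

lemma sdiffL (S0 S1 : Finset V) (u : V) :
    Finset.univ \ (insert u S0 ∪ S1) = (Finset.univ \ (S0 ∪ S1)).erase u := by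
  ext y; simp only [mem_sdiff, mem_union, mem_insert, mem_erase, Finset.mem_univ, true_and]
  tauto

lemma sdiffR (S0 S1 : Finset V) (u : V) :
    Finset.univ \ (S0 ∪ insert u S1) = (Finset.univ \ (S0 ∪ S1)).erase u := by
  ext y; simp only [mem_sdiff, mem_union, mem_insert, mem_erase, Finset.mem_univ, true_and]
  tauto

lemma mem_avail {S0 S1 : Finset V} {x : V} (hx0 : x ∉ S0) (hx1 : x ∉ S1) :
    x ∈ Finset.univ \ (S0 ∪ S1) := by simp [hx0, hx1]

lemma availL {S0 S1 : Finset V} {x : V} (hx0 : x ∉ S0) (hx1 : x ∉ S1) :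
    Finset.univ \ (S0 ∪ S1) = insert x (Finset.univ \ (insert x S0 ∪ S1)) := by
  rw [sdiffL, insert_erase (mem_avail hx0 hx1)]

lemma availR {S0 S1 : Finset V} {x : V} (hx0 : x ∉ S0) (hx1 : x ∉ S1) :
    Finset.univ \ (S0 ∪ S1) = insert x (Finset.univ \ (S0 ∪ insert x S1)) := by
  rw [sdiffR, insert_erase (mem_avail hx0 hx1)]

lemma cardL {S0 S1 : Finset V} {x : V} {k : ℕ} (hx0 : x ∉ S0) (hx1 : x ∉ S1)
    (hk : (Finset.univ \ (S0 ∪ S1)).card = k + 1) :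
    (Finset.univ \ (insert x S0 ∪ S1)).card = k := by
  rw [sdiffL, card_erase_of_mem (mem_avail hx0 hx1), hk]; omega

lemma cardR {S0 S1 : Finset V} {x : V} {k : ℕ} (hx0 : x ∉ S0) (hx1 : x ∉ S1)
    (hk : (Finset.univ \ (S0 ∪ S1)).card = k + 1) :
    (Finset.univ \ (S0 ∪ insert x S1)).card = k := by
  rw [sdiffR, card_erase_of_mem (mem_avail hx0 hx1), hk]; omega

omit [Fintype V] in
lemma unionLR (S0 S1 : Finset V) (u x : V) :
    insert u (insert x S0) ∪ S1 = insert u S0 ∪ insert x S1 := by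
  ext y
  simp only [mem_union, mem_insert]
  tauto

lemma ncard_N_le [DecidableRel G.Adj] (x : V) (S : Set V) :
    ({e ∈ G.edgeSet | ∃ v ∈ S, e = s(x, v)}.ncard) ≤ G.maxDegree := by
  have hsub : {e ∈ G.edgeSet | ∃ v ∈ S, e = s(x, v)} ⊆ G.incidenceSet x := by
    rintro e ⟨he, v, hv, rfl⟩
    exact ⟨he, Sym2.mem_mk_left x v⟩
  refine le_trans (Set.ncard_le_ncard hsub (Set.toFinite _)) ?_
  have h1 : (G.incidenceSet x).ncard = G.degree x := by
    rw [← Nat.card_coe_set_eq, Nat.card_eq_fintype_card, card_incidenceSet_eq_degree]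
  rw [h1]
  exact G.degree_le_maxDegree x

lemma bscore_flip_both [DecidableRel G.Adj] (x : V) (S0 S1 : Set V) :
    bscore G (insert x S0) S1 ≤ bscore G S0 (insert x S1) + 2 * (G.maxDegree : ℤ) ∧
    bscore G S0 (insert x S1) ≤ bscore G (insert x S0) S1 + 2 * (G.maxDegree : ℤ) := by
  classical
  set C : Set (Sym2 V) := {e ∈ G.edgeSet | ∃ u ∈ S0, ∃ v ∈ S1, e = s(u, v)} with hC
  set M : Set (Sym2 V) := {e ∈ G.edgeSet | (∃ u ∈ S0, ∃ v ∈ S0, e = s(u, v)) ∨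
      (∃ u ∈ S1, ∃ v ∈ S1, e = s(u, v))} with hM
  set N0 : Set (Sym2 V) := {e ∈ G.edgeSet | ∃ v ∈ S0, e = s(x, v)} with hN0
  set N1 : Set (Sym2 V) := {e ∈ G.edgeSet | ∃ v ∈ S1, e = s(x, v)} with hN1
  have hC1 : {e ∈ G.edgeSet | ∃ u ∈ insert x S0, ∃ v ∈ S1, e = s(u, v)} = C ∪ N1 := by
    ext e
    constructor
    · rintro ⟨he, u, hu, v, hv, rfl⟩
      rcases hu with rfl | hu
      · exact Or.inr ⟨he, v, hv, rfl⟩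
      · exact Or.inl ⟨he, u, hu, v, hv, rfl⟩
    · rintro (⟨he, u, hu, v, hv, rfl⟩ | ⟨he, v, hv, rfl⟩)
      · exact ⟨he, u, Or.inr hu, v, hv, rfl⟩
      · exact ⟨he, x, Or.inl rfl, v, hv, rfl⟩
  have hM1 : {e ∈ G.edgeSet | (∃ u ∈ insert x S0, ∃ v ∈ insert x S0, e = s(u, v)) ∨
      (∃ u ∈ S1, ∃ v ∈ S1, e = s(u, v))} = M ∪ N0 := by
    ext e
    constructor
    · rintro ⟨he, (⟨u, hu, v, hv, rfl⟩ | h1)⟩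
      · rcases hu with rfl | hu
        · rcases hv with rfl | hv
          · exact absurd (G.mem_edgeSet.mp he) (G.irrefl)
          · exact Or.inr ⟨he, v, hv, rfl⟩
        · rcases hv with rfl | hv
          · exact Or.inr ⟨he, u, hu, Sym2.eq_swap⟩
          · exact Or.inl ⟨he, Or.inl ⟨u, hu, v, hv, rfl⟩⟩
      · exact Or.inl ⟨he, Or.inr h1⟩
    · rintro (⟨he, (⟨u, hu, v, hv, rfl⟩ | h1)⟩ | ⟨he, v, hv, rfl⟩)
      · exact ⟨he, Or.inl ⟨u, Or.inr hu, v, Or.inr hv, rfl⟩⟩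
      · exact ⟨he, Or.inr h1⟩
      · exact ⟨he, Or.inl ⟨x, Or.inl rfl, v, Or.inr hv, rfl⟩⟩
  have hC2 : {e ∈ G.edgeSet | ∃ u ∈ S0, ∃ v ∈ insert x S1, e = s(u, v)} = C ∪ N0 := by
    ext e
    constructor
    · rintro ⟨he, u, hu, v, hv, rfl⟩
      rcases hv with rfl | hv
      · exact Or.inr ⟨he, u, hu, Sym2.eq_swap⟩
      · exact Or.inl ⟨he, u, hu, v, hv, rfl⟩
    · rintro (⟨he, u, hu, v, hv, rfl⟩ | ⟨he, v, hv, rfl⟩)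
      · exact ⟨he, u, hu, v, Or.inr hv, rfl⟩
      · exact ⟨he, v, hv, x, Or.inl rfl, Sym2.eq_swap⟩
  have hM2 : {e ∈ G.edgeSet | (∃ u ∈ S0, ∃ v ∈ S0, e = s(u, v)) ∨
      (∃ u ∈ insert x S1, ∃ v ∈ insert x S1, e = s(u, v))} = M ∪ N1 := by
    ext e
    constructor
    · rintro ⟨he, (h0 | ⟨u, hu, v, hv, rfl⟩)⟩
      · exact Or.inl ⟨he, Or.inl h0⟩
      · rcases hu with rfl | hu
        · rcases hv with rfl | hv
          · exact absurd (G.mem_edgeSet.mp he) (G.irrefl)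
          · exact Or.inr ⟨he, v, hv, rfl⟩
        · rcases hv with rfl | hv
          · exact Or.inr ⟨he, u, hu, Sym2.eq_swap⟩
          · exact Or.inl ⟨he, Or.inr ⟨u, hu, v, hv, rfl⟩⟩
    · rintro (⟨he, (h0 | ⟨u, hu, v, hv, rfl⟩)⟩ | ⟨he, v, hv, rfl⟩)
      · exact ⟨he, Or.inl h0⟩
      · exact ⟨he, Or.inr ⟨u, Or.inr hu, v, Or.inr hv, rfl⟩⟩
      · exact ⟨he, Or.inr ⟨x, Or.inl rfl, v, Or.inr hv, rfl⟩⟩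
  have key : bscore G (insert x S0) S1 = ((C ∪ N1).ncard : ℤ) - ((M ∪ N0).ncard : ℤ) := by
    rw [bscore, hC1, hM1]
  have key2 : bscore G S0 (insert x S1) = ((C ∪ N0).ncard : ℤ) - ((M ∪ N1).ncard : ℤ) := by
    rw [bscore, hC2, hM2]
  have h1 : (C ∪ N1).ncard ≤ C.ncard + N1.ncard := Set.ncard_union_le _ _
  have h2 : M.ncard ≤ (M ∪ N0).ncard := Set.ncard_le_ncard Set.subset_union_left (Set.toFinite _)
  have h3 : C.ncard ≤ (C ∪ N0).ncard := Set.ncard_le_ncard Set.subset_union_left (Set.toFinite _)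
  have h4 : (M ∪ N1).ncard ≤ M.ncard + N1.ncard := Set.ncard_union_le _ _
  have h5 : N1.ncard ≤ G.maxDegree := ncard_N_le G x S1
  have h6 : (C ∪ N0).ncard ≤ C.ncard + N0.ncard := Set.ncard_union_le _ _
  have h7 : M.ncard ≤ (M ∪ N1).ncard := Set.ncard_le_ncard Set.subset_union_left (Set.toFinite _)
  have h8 : C.ncard ≤ (C ∪ N1).ncard := Set.ncard_le_ncard Set.subset_union_left (Set.toFinite _)
  have h9 : (M ∪ N0).ncard ≤ M.ncard + N0.ncard := Set.ncard_union_le _ _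
  have h10 : N0.ncard ≤ G.maxDegree := ncard_N_le G x S0
  rw [key, key2]
  constructor
  · have c1 : ((C ∪ N1).ncard : ℤ) ≤ (C.ncard : ℤ) + N1.ncard := by exact_mod_cast h1
    have c2 : ((M).ncard : ℤ) ≤ ((M ∪ N0).ncard : ℤ) := by exact_mod_cast h2
    have c3 : ((C).ncard : ℤ) ≤ ((C ∪ N0).ncard : ℤ) := by exact_mod_cast h3
    have c4 : ((M ∪ N1).ncard : ℤ) ≤ (M.ncard : ℤ) + N1.ncard := by exact_mod_cast h4
    have c5 : ((N1.ncard : ℤ)) ≤ (G.maxDegree : ℤ) := by exact_mod_cast h5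
    linarith
  · have c1 : ((C ∪ N0).ncard : ℤ) ≤ (C.ncard : ℤ) + N0.ncard := by exact_mod_cast h6
    have c2 : ((M).ncard : ℤ) ≤ ((M ∪ N1).ncard : ℤ) := by exact_mod_cast h7
    have c3 : ((C).ncard : ℤ) ≤ ((C ∪ N1).ncard : ℤ) := by exact_mod_cast h8
    have c4 : ((M ∪ N0).ncard : ℤ) ≤ (M.ncard : ℤ) + N0.ncard := by exact_mod_cast h9
    have c5 : ((N0.ncard : ℤ)) ≤ (G.maxDegree : ℤ) := by exact_mod_cast h10
    linarith

lemma bscore_flip [DecidableRel G.Adj] (x : V) (S0 S1 : Set V) :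
    bscore G (insert x S0) S1 ≤ bscore G S0 (insert x S1) + 2 * (G.maxDegree : ℤ) :=
  (bscore_flip_both G x S0 S1).1

lemma bscore_flip2 [DecidableRel G.Adj] (x : V) (S0 S1 : Set V) :
    bscore G S0 (insert x S1) ≤ bscore G (insert x S0) S1 + 2 * (G.maxDegree : ℤ) :=
  (bscore_flip_both G x S0 S1).2

lemma bscore_swap [DecidableRel G.Adj] (u x : V) (S0 S1 : Set V) :
    bscore G (insert u S0) (insert x S1)
      ≤ bscore G (insert x S0) (insert u S1) + 4 * (G.maxDegree : ℤ) := by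
  have h1 := bscore_flip2 G x (insert u S0) S1
  have h2 : bscore G (insert x (insert u S0)) S1
      = bscore G (insert u (insert x S0)) S1 := by rw [Set.insert_comm]
  have h3 := bscore_flip G u (insert x S0) S1
  linarith

end Aux
section Fam

variable {V : Type*} [Fintype V] (G : SimpleGraph V)

lemma famLower [DecidableRel G.Adj] (c : ℤ) (hc : 0 ≤ c) (pp : Prop)
    (hflip : ¬pp → ∀ (S0 S1 : Set V) (x : V),
      bscore G (insert x S0) S1 ≤ bscore G S0 (insert x S1) + c) :
    ∀ (k : ℕ) (S0 S1 : Finset V) (x : V), x ∉ S0 → x ∉ S1 →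
      (Finset.univ \ (insert x S0 ∪ S1)).card = k →
      ((Even k ↔ pp) →
        gameVal G k true (insert x S0) S1 ≤ gameVal G (k+1) true S0 S1 + c) ∧
      ((Even k ↔ ¬pp) →
        gameVal G k false (insert x S0) S1 ≤ gameVal G (k+1) false S0 S1 + c) := by
  intro k
  induction k with
  | zero =>
    intro S0 S1 x hx0 hx1 hk
    have hU : Finset.univ \ (insert x S0 ∪ S1) = ∅ := card_eq_zero.mp hk
    have hA : Finset.univ \ (S0 ∪ S1) = {x} := by rw [availL hx0 hx1, hU]; rfl
    have hAne : (Finset.univ \ (S0 ∪ S1)).Nonempty := by rw [hA]; exact ⟨x, mem_singleton_self x⟩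
    constructor
    · intro _
      have h2 : gameVal G 0 false (insert x S0) S1 ≤ gameVal G 1 true S0 S1 := by
        rw [gameVal_true_eq G hAne]
        apply Finset.le_inf'
        intro b hb
        rw [hA, mem_singleton] at hb
        subst hb
        exact le_refl _
      calc gameVal G 0 true (insert x S0) S1 = gameVal G 0 false (insert x S0) S1 := rfl
        _ ≤ gameVal G 1 true S0 S1 := h2
        _ ≤ gameVal G 1 true S0 S1 + c := by linarith
    · intro hg
      have hp : ¬pp := hg.mp (by simp)
      have h2 : gameVal G 0 true S0 (insert x S1) ≤ gameVal G 1 false S0 S1 := by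
        rw [gameVal_false_eq G hAne]
        exact Finset.le_sup' (fun v => gameVal G 0 true S0 (insert v S1)) (mem_avail hx0 hx1)
      have h3 : bscore G ↑(insert x S0) ↑S1 ≤ bscore G ↑S0 ↑(insert x S1) + c := by
        rw [Finset.coe_insert, Finset.coe_insert]
        exact hflip hp _ _ x
      calc gameVal G 0 false (insert x S0) S1 = bscore G ↑(insert x S0) ↑S1 := rfl
        _ ≤ bscore G ↑S0 ↑(insert x S1) + c := h3
        _ = gameVal G 0 true S0 (insert x S1) + c := rfl
        _ ≤ gameVal G 1 false S0 S1 + c := by linarith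
  | succ k ih =>
    intro S0 S1 x hx0 hx1 hk
    have hUne : (Finset.univ \ (insert x S0 ∪ S1)).Nonempty := by
      rw [← card_pos, hk]; omega
    have hxA : x ∈ Finset.univ \ (S0 ∪ S1) := mem_avail hx0 hx1
    have hAne : (Finset.univ \ (S0 ∪ S1)).Nonempty := ⟨x, hxA⟩
    have hAcard : (Finset.univ \ (S0 ∪ S1)).card = k + 2 := by
      rw [availL hx0 hx1, card_insert_of_notMem (by simp), hk]
    constructor
    · intro hg
      have hg' : Even k ↔ ¬pp := by
        rw [Nat.even_add_one] at hg; tauto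
      rw [gameVal_true_eq G hUne, gameVal_true_eq G hAne, ← sub_le_iff_le_add]
      apply Finset.le_inf'
      intro b hb
      rw [sub_le_iff_le_add]
      by_cases hbx : b = x
      · subst hbx
        obtain ⟨a, ha⟩ := id hUne
        have ha' : a ∉ insert b S0 ∧ a ∉ S1 := by
          simp only [mem_sdiff, mem_union, Finset.mem_univ, true_and, not_or] at ha
          exact ha
        have hcard : (Finset.univ \ (insert a (insert b S0) ∪ S1)).card = k :=
          cardL ha'.1 ha'.2 hk
        calc (Finset.univ \ (insert b S0 ∪ S1)).inf' hUne
              (fun v => gameVal G k false (insert v (insert b S0)) S1)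
            ≤ gameVal G k false (insert a (insert b S0)) S1 := Finset.inf'_le _ ha
          _ ≤ gameVal G (k+1) false (insert b S0) S1 + c :=
              (ih (insert b S0) S1 a ha'.1 ha'.2 hcard).2 hg'
      · have hb' : b ∈ Finset.univ \ (insert x S0 ∪ S1) := by
          simp only [mem_sdiff, mem_union, Finset.mem_univ, true_and, not_or] at hb ⊢
          simp only [mem_insert, not_or]
          tauto
        have hbS : b ∉ S0 ∧ b ∉ S1 := by
          simp only [mem_sdiff, mem_union, Finset.mem_univ, true_and, not_or] at hb
          exact hb
        have hxb : x ∉ insert b S0 := by simp [hx0, Ne.symm hbx]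
        have hcard : (Finset.univ \ (insert x (insert b S0) ∪ S1)).card = k := by
          rw [Finset.insert_comm, sdiffL (insert x S0) S1 b,
            card_erase_of_mem hb', hk]; omega
        calc (Finset.univ \ (insert x S0 ∪ S1)).inf' hUne
              (fun v => gameVal G k false (insert v (insert x S0)) S1)
            ≤ gameVal G k false (insert b (insert x S0)) S1 := Finset.inf'_le _ hb'
          _ = gameVal G k false (insert x (insert b S0)) S1 := by rw [Finset.insert_comm]
          _ ≤ gameVal G (k+1) false (insert b S0) S1 + c :=
              (ih (insert b S0) S1 x hxb hx1 hcard).2 hg'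
    · intro hg
      have hg' : Even k ↔ pp := by
        rw [Nat.even_add_one] at hg; tauto
      rw [gameVal_false_eq G hUne, gameVal_false_eq G hAne]
      apply Finset.sup'_le
      intro w hw
      have hwm : w ∉ insert x S0 ∧ w ∉ S1 := by
        simp only [mem_sdiff, mem_union, Finset.mem_univ, true_and, not_or] at hw
        exact hw
      have hwx : w ≠ x := by
        intro h; exact hwm.1 (h ▸ mem_insert_self x S0)
      have hx1' : x ∉ insert w S1 := by simp [hx1, Ne.symm hwx]
      have hcard : (Finset.univ \ (insert x S0 ∪ insert w S1)).card = k := by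
        rw [sdiffR (insert x S0) S1 w, card_erase_of_mem hw, hk]; omega
      have hwA : w ∈ Finset.univ \ (S0 ∪ S1) := by
        simp only [mem_sdiff, mem_union, Finset.mem_univ, true_and, not_or]
        constructor
        · intro h; exact hwm.1 (mem_insert_of_mem h)
        · exact hwm.2
      calc gameVal G k true (insert x S0) (insert w S1)
          ≤ gameVal G (k+1) true S0 (insert w S1) + c :=
            (ih S0 (insert w S1) x hx0 hx1' hcard).1 hg'
        _ ≤ (Finset.univ \ (S0 ∪ S1)).sup' hAne
              (fun v => gameVal G (k+1) true S0 (insert v S1)) + c := by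
            have := Finset.le_sup' (fun v => gameVal G (k+1) true S0 (insert v S1)) hwA
            linarith

lemma famUpper [DecidableRel G.Adj] (c : ℤ) (hc : 0 ≤ c) (pp : Prop)
    (hflip2 : pp → ∀ (S0 S1 : Set V) (x : V),
      bscore G S0 (insert x S1) ≤ bscore G (insert x S0) S1 + c)
    (hswap : ¬pp → ∀ (S0 S1 : Set V) (u x : V),
      bscore G (insert u S0) (insert x S1) ≤ bscore G (insert x S0) (insert u S1) + c) :
    ∀ (k : ℕ),
    ((∀ (S0 S1 : Finset V) (x : V), x ∉ S0 → x ∉ S1 →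
      (Finset.univ \ (S0 ∪ insert x S1)).card = k →
      ((Even k ↔ pp) →
        gameVal G k true S0 (insert x S1) ≤ gameVal G (k+1) true S0 S1 + c) ∧
      ((Even k ↔ ¬pp) →
        gameVal G k false S0 (insert x S1) ≤ gameVal G (k+1) false S0 S1 + c))
    ∧
    (∀ (S0 S1 : Finset V) (u x : V), u ∉ S0 → u ∉ S1 → x ∉ S0 → x ∉ S1 → u ≠ x →
      (Finset.univ \ (insert u S0 ∪ insert x S1)).card = k →
      ((Even k ↔ pp) →
        gameVal G k true (insert u S0) (insert x S1)
          ≤ gameVal G (k+1) true (insert x S0) S1 + c) ∧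
      ((Even k ↔ ¬pp) →
        gameVal G k false (insert u S0) (insert x S1)
          ≤ gameVal G (k+1) false (insert x S0) S1 + c))) := by
  intro k
  induction k with
  | zero =>
    constructor
    · -- Part 2, k = 0
      intro S0 S1 x hx0 hx1 hk
      have hU : Finset.univ \ (S0 ∪ insert x S1) = ∅ := card_eq_zero.mp hk
      have hA : Finset.univ \ (S0 ∪ S1) = {x} := by rw [availR hx0 hx1, hU]; rfl
      have hAne : (Finset.univ \ (S0 ∪ S1)).Nonempty := by
        rw [hA]; exact ⟨x, mem_singleton_self x⟩
      constructor
      · intro hg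
        have hp : pp := hg.mp (by simp)
        have h2 : bscore G ↑(insert x S0) ↑S1 ≤ gameVal G 1 true S0 S1 := by
          rw [gameVal_true_eq G hAne]
          apply Finset.le_inf'
          intro b hb
          rw [hA, mem_singleton] at hb
          subst hb
          exact le_refl _
        have h3 : bscore G ↑S0 ↑(insert x S1) ≤ bscore G ↑(insert x S0) ↑S1 + c := by
          rw [Finset.coe_insert, Finset.coe_insert]
          exact hflip2 hp _ _ x
        calc gameVal G 0 true S0 (insert x S1) = bscore G ↑S0 ↑(insert x S1) := rfl
          _ ≤ bscore G ↑(insert x S0) ↑S1 + c := h3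
          _ ≤ gameVal G 1 true S0 S1 + c := by linarith
      · intro _
        have h2 : gameVal G 0 true S0 (insert x S1) ≤ gameVal G 1 false S0 S1 := by
          rw [gameVal_false_eq G hAne]
          exact Finset.le_sup' (fun v => gameVal G 0 true S0 (insert v S1))
            (mem_avail hx0 hx1)
        calc gameVal G 0 false S0 (insert x S1)
            = gameVal G 0 true S0 (insert x S1) := rfl
          _ ≤ gameVal G 1 false S0 S1 := h2
          _ ≤ gameVal G 1 false S0 S1 + c := by linarith
    · -- Part 3, k = 0
      intro S0 S1 u x hu0 hu1 hx0 hx1 hux hk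
      have hU : Finset.univ \ (insert u S0 ∪ insert x S1) = ∅ := card_eq_zero.mp hk
      have hU' : Finset.univ \ (insert u (insert x S0) ∪ S1) = ∅ := by
        rw [unionLR]; exact hU
      have hu0' : u ∉ insert x S0 := by simp [hu0, hux]
      have hA : Finset.univ \ (insert x S0 ∪ S1) = {u} := by
        rw [availL hu0' hu1, hU']; rfl
      have hAne : (Finset.univ \ (insert x S0 ∪ S1)).Nonempty := by
        rw [hA]; exact ⟨u, mem_singleton_self u⟩
      constructor
      · intro hg
        have hp : pp := hg.mp (by simp)
        have h2 : bscore G ↑(insert u (insert x S0)) ↑S1 ≤ gameVal G 1 true (insert x S0) S1 := by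
          rw [gameVal_true_eq G hAne]
          apply Finset.le_inf'
          intro b hb
          rw [hA, mem_singleton] at hb
          subst hb
          exact le_refl _
        have h3 : bscore G ↑(insert u S0) ↑(insert x S1)
            ≤ bscore G ↑(insert u (insert x S0)) ↑S1 + c := by
          rw [Finset.coe_insert, Finset.coe_insert, Finset.coe_insert, Finset.coe_insert]
          rw [Set.insert_comm]
          exact hflip2 hp (insert u ↑S0) ↑S1 x
        calc gameVal G 0 true (insert u S0) (insert x S1)
            = bscore G ↑(insert u S0) ↑(insert x S1) := rfl
          _ ≤ bscore G ↑(insert u (insert x S0)) ↑S1 + c := h3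
          _ ≤ gameVal G 1 true (insert x S0) S1 + c := by linarith
      · intro hg
        have hp : ¬pp := hg.mp (by simp)
        have hmem : u ∈ Finset.univ \ (insert x S0 ∪ S1) := mem_avail hu0' hu1
        have h2 : gameVal G 0 true (insert x S0) (insert u S1)
            ≤ gameVal G 1 false (insert x S0) S1 := by
          rw [gameVal_false_eq G hAne]
          exact Finset.le_sup' (fun v => gameVal G 0 true (insert x S0) (insert v S1)) hmem
        have h3 : bscore G ↑(insert u S0) ↑(insert x S1)
            ≤ bscore G ↑(insert x S0) ↑(insert u S1) + c := by
          rw [Finset.coe_insert, Finset.coe_insert, Finset.coe_insert, Finset.coe_insert]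
          exact hswap hp _ _ u x
        calc gameVal G 0 false (insert u S0) (insert x S1)
            = bscore G ↑(insert u S0) ↑(insert x S1) := rfl
          _ ≤ bscore G ↑(insert x S0) ↑(insert u S1) + c := h3
          _ = gameVal G 0 true (insert x S0) (insert u S1) + c := rfl
          _ ≤ gameVal G 1 false (insert x S0) S1 + c := by linarith
  | succ k ih =>
    obtain ⟨ih2, ih3⟩ := ih
    constructor
    · -- Part 2, k+1
      intro S0 S1 x hx0 hx1 hk
      have hUne : (Finset.univ \ (S0 ∪ insert x S1)).Nonempty := by
        rw [← card_pos, hk]; omega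
      have hxA : x ∈ Finset.univ \ (S0 ∪ S1) := mem_avail hx0 hx1
      have hAne : (Finset.univ \ (S0 ∪ S1)).Nonempty := ⟨x, hxA⟩
      constructor
      · -- P2 step (true)
        intro hg
        have hg' : Even k ↔ ¬pp := by rw [Nat.even_add_one] at hg; tauto
        rw [gameVal_true_eq G hUne, gameVal_true_eq G hAne, ← sub_le_iff_le_add]
        apply Finset.le_inf'
        intro b hb
        rw [sub_le_iff_le_add]
        have hbS : b ∉ S0 ∧ b ∉ S1 := by
          simp only [mem_sdiff, mem_union, Finset.mem_univ, true_and, not_or] at hb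
          exact hb
        by_cases hbx : b = x
        · subst hbx
          obtain ⟨a, ha⟩ := id hUne
          have haS : a ∉ S0 ∧ a ∉ insert b S1 := by
            simp only [mem_sdiff, mem_union, Finset.mem_univ, true_and, not_or] at ha
            exact ha
          have hab : a ≠ b := by
            intro h; exact haS.2 (h ▸ mem_insert_self b S1)
          have ha1 : a ∉ S1 := fun h => haS.2 (mem_insert_of_mem h)
          have hcard : (Finset.univ \ (insert a S0 ∪ insert b S1)).card = k := by
            rw [sdiffL S0 (insert b S1) a, card_erase_of_mem ha, hk]; omega
          calc (Finset.univ \ (S0 ∪ insert b S1)).inf' hUne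
                (fun v => gameVal G k false (insert v S0) (insert b S1))
              ≤ gameVal G k false (insert a S0) (insert b S1) := Finset.inf'_le _ ha
            _ ≤ gameVal G (k+1) false (insert b S0) S1 + c :=
                (ih3 S0 S1 a b haS.1 ha1 hbS.1 hbS.2 hab hcard).2 hg'
        · have hb' : b ∈ Finset.univ \ (S0 ∪ insert x S1) := by
            simp only [mem_sdiff, mem_union, Finset.mem_univ, true_and, not_or, mem_insert]
            tauto
          have hx0' : x ∉ insert b S0 := by simp [hx0, Ne.symm hbx]
          have hcard : (Finset.univ \ (insert b S0 ∪ insert x S1)).card = k := by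
            rw [sdiffL S0 (insert x S1) b, card_erase_of_mem hb', hk]; omega
          calc (Finset.univ \ (S0 ∪ insert x S1)).inf' hUne
                (fun v => gameVal G k false (insert v S0) (insert x S1))
              ≤ gameVal G k false (insert b S0) (insert x S1) := Finset.inf'_le _ hb'
            _ ≤ gameVal G (k+1) false (insert b S0) S1 + c :=
                (ih2 (insert b S0) S1 x hx0' hx1 hcard).2 hg'
      · -- Q2 step (false)
        intro hg
        have hg' : Even k ↔ pp := by
          rw [Nat.even_add_one] at hg
          by_cases h : pp <;> tauto
        rw [gameVal_false_eq G hUne, gameVal_false_eq G hAne]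
        apply Finset.sup'_le
        intro w hw
        have hwS : w ∉ S0 ∧ w ∉ insert x S1 := by
          simp only [mem_sdiff, mem_union, Finset.mem_univ, true_and, not_or] at hw
          exact hw
        have hwx : w ≠ x := by
          intro h; exact hwS.2 (h ▸ mem_insert_self x S1)
        have hw1 : w ∉ S1 := fun h => hwS.2 (mem_insert_of_mem h)
        have hx1' : x ∉ insert w S1 := by simp [hx1, Ne.symm hwx]
        have hcard : (Finset.univ \ (S0 ∪ insert x (insert w S1))).card = k := by
          rw [Finset.insert_comm, sdiffR S0 (insert x S1) w, card_erase_of_mem hw, hk]; omega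
        have hwA : w ∈ Finset.univ \ (S0 ∪ S1) := mem_avail hwS.1 hw1
        calc gameVal G k true S0 (insert w (insert x S1))
            = gameVal G k true S0 (insert x (insert w S1)) := by rw [Finset.insert_comm]
          _ ≤ gameVal G (k+1) true S0 (insert w S1) + c :=
              (ih2 S0 (insert w S1) x hx0 hx1' hcard).1 hg'
          _ ≤ (Finset.univ \ (S0 ∪ S1)).sup' hAne
                (fun v => gameVal G (k+1) true S0 (insert v S1)) + c := by
              have := Finset.le_sup' (fun v => gameVal G (k+1) true S0 (insert v S1)) hwA
              linarith
    · -- Part 3, k+1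
      intro S0 S1 u x hu0 hu1 hx0 hx1 hux hk
      have hUne : (Finset.univ \ (insert u S0 ∪ insert x S1)).Nonempty := by
        rw [← card_pos, hk]; omega
      have hu0' : u ∉ insert x S0 := by simp [hu0, hux]
      have huA : u ∈ Finset.univ \ (insert x S0 ∪ S1) := mem_avail hu0' hu1
      have hAne : (Finset.univ \ (insert x S0 ∪ S1)).Nonempty := ⟨u, huA⟩
      have hAeq : Finset.univ \ (insert x S0 ∪ S1)
          = insert u (Finset.univ \ (insert u S0 ∪ insert x S1)) := by
        rw [availL hu0' hu1, unionLR]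
      constructor
      · -- P3 step (true)
        intro hg
        have hg' : Even k ↔ ¬pp := by rw [Nat.even_add_one] at hg; tauto
        rw [gameVal_true_eq G hUne, gameVal_true_eq G hAne, ← sub_le_iff_le_add]
        apply Finset.le_inf'
        intro b hb
        rw [sub_le_iff_le_add]
        have hbS : b ∉ insert x S0 ∧ b ∉ S1 := by
          simp only [mem_sdiff, mem_union, Finset.mem_univ, true_and, not_or] at hb
          exact hb
        have hbx : b ≠ x := by
          intro h; exact hbS.1 (h ▸ mem_insert_self x S0)
        have hb0 : b ∉ S0 := fun h => hbS.1 (mem_insert_of_mem h)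
        by_cases hbu : b = u
        · subst hbu
          obtain ⟨a, ha⟩ := id hUne
          have haS : a ∉ insert b S0 ∧ a ∉ insert x S1 := by
            simp only [mem_sdiff, mem_union, Finset.mem_univ, true_and, not_or] at ha
            exact ha
          have hab : a ≠ b := fun h => haS.1 (h ▸ mem_insert_self b S0)
          have hax : a ≠ x := fun h => haS.2 (h ▸ mem_insert_self x S1)
          have ha0 : a ∉ S0 := fun h => haS.1 (mem_insert_of_mem h)
          have ha1 : a ∉ S1 := fun h => haS.2 (mem_insert_of_mem h)
          have hx0'' : x ∉ insert b S0 := by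
            simp only [mem_insert, not_or]
            exact ⟨Ne.symm hbx, hx0⟩
          have hcard : (Finset.univ \ (insert a (insert b S0) ∪ insert x S1)).card = k := by
            rw [sdiffL (insert b S0) (insert x S1) a, card_erase_of_mem ha, hk]
            omega
          calc (Finset.univ \ (insert b S0 ∪ insert x S1)).inf' hUne
                (fun v => gameVal G k false (insert v (insert b S0)) (insert x S1))
              ≤ gameVal G k false (insert a (insert b S0)) (insert x S1) :=
                Finset.inf'_le _ ha
            _ ≤ gameVal G (k+1) false (insert x (insert b S0)) S1 + c :=
                (ih3 (insert b S0) S1 a x haS.1 ha1 hx0'' hx1 hax hcard).2 hg'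
            _ = gameVal G (k+1) false (insert b (insert x S0)) S1 + c := by
                rw [Finset.insert_comm]
        · have hb'' : b ∈ Finset.univ \ (insert u S0 ∪ insert x S1) := by
            simp only [mem_sdiff, mem_union, Finset.mem_univ, true_and, not_or, mem_insert]
            exact ⟨⟨hbu, hb0⟩, hbx, hbS.2⟩
          have hu0'' : u ∉ insert b S0 := by
            simp only [mem_insert, not_or]
            exact ⟨fun h => hbu h.symm, hu0⟩
          have hx0'' : x ∉ insert b S0 := by simp [hx0, Ne.symm hbx]
          have hcard : (Finset.univ \ (insert u (insert b S0) ∪ insert x S1)).card = k := by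
            rw [Finset.insert_comm, sdiffL (insert u S0) (insert x S1) b,
              card_erase_of_mem hb'', hk]
            omega
          calc (Finset.univ \ (insert u S0 ∪ insert x S1)).inf' hUne
                (fun v => gameVal G k false (insert v (insert u S0)) (insert x S1))
              ≤ gameVal G k false (insert b (insert u S0)) (insert x S1) :=
                Finset.inf'_le _ hb''
            _ = gameVal G k false (insert u (insert b S0)) (insert x S1) := by
                rw [Finset.insert_comm]
            _ ≤ gameVal G (k+1) false (insert x (insert b S0)) S1 + c :=
                (ih3 (insert b S0) S1 u x hu0'' hu1 hx0'' hx1 hux hcard).2 hg'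
            _ = gameVal G (k+1) false (insert b (insert x S0)) S1 + c := by
                rw [Finset.insert_comm]
      · -- Q3 step (false)
        intro hg
        have hg' : Even k ↔ pp := by
          rw [Nat.even_add_one] at hg
          by_cases h : pp <;> tauto
        rw [gameVal_false_eq G hUne, gameVal_false_eq G hAne]
        apply Finset.sup'_le
        intro w hw
        have hwS : w ∉ insert u S0 ∧ w ∉ insert x S1 := by
          simp only [mem_sdiff, mem_union, Finset.mem_univ, true_and, not_or] at hw
          exact hw
        have hwu : w ≠ u := fun h => hwS.1 (h ▸ mem_insert_self u S0)
        have hwx : w ≠ x := fun h => hwS.2 (h ▸ mem_insert_self x S1)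
        have hw0 : w ∉ S0 := fun h => hwS.1 (mem_insert_of_mem h)
        have hw1 : w ∉ S1 := fun h => hwS.2 (mem_insert_of_mem h)
        have hu1'' : u ∉ insert w S1 := by simp [hu1, Ne.symm hwu]
        have hx1'' : x ∉ insert w S1 := by simp [hx1, Ne.symm hwx]
        have hcard : (Finset.univ \ (insert u S0 ∪ insert x (insert w S1))).card = k := by
          rw [Finset.insert_comm, sdiffR (insert u S0) (insert x S1) w,
            card_erase_of_mem hw, hk]
          omega
        have hwA : w ∈ Finset.univ \ (insert x S0 ∪ S1) := by
          have hw0' : w ∉ insert x S0 := by simp [hw0, hwx]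
          exact mem_avail hw0' hw1
        calc gameVal G k true (insert u S0) (insert w (insert x S1))
            = gameVal G k true (insert u S0) (insert x (insert w S1)) := by
              rw [Finset.insert_comm]
          _ ≤ gameVal G (k+1) true (insert x S0) (insert w S1) + c :=
              (ih3 S0 (insert w S1) u x hu0 hu1'' hx0 hx1'' hux hcard).1 hg'
          _ ≤ (Finset.univ \ (insert x S0 ∪ S1)).sup' hAne
                (fun v => gameVal G (k+1) true (insert x S0) (insert v S1)) + c := by
              have := Finset.le_sup'
                (fun v => gameVal G (k+1) true (insert x S0) (insert v S1)) hwA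
              linarith

end Fam

theorem statement_2 {V : Type*} [Fintype V] (G : SimpleGraph V) [DecidableRel G.Adj] :
    (Even (Fintype.card V) →
      balA G ≤ balI G ∧ balI G ≤ balA G + 4 * (G.maxDegree : ℤ)) ∧
    (Odd (Fintype.card V) →
      balA G - 2 * (G.maxDegree : ℤ) ≤ balI G ∧ balI G ≤ balA G + 2 * (G.maxDegree : ℤ)) := by
  have hD : (0:ℤ) ≤ (G.maxDegree : ℤ) := Int.natCast_nonneg _
  rcases Nat.eq_zero_or_pos (Fintype.card V) with h0 | hpos
  · have heq : balA G = balI G := by rw [balA, balI, h0, gameVal_zero, gameVal_zero]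
    constructor
    · intro _
      exact ⟨heq.le, by rw [heq]; linarith⟩
    · intro hodd
      rw [h0] at hodd
      simp [Nat.odd_iff] at hodd
  · obtain ⟨m, hm⟩ : ∃ m, Fintype.card V = m + 1 := ⟨Fintype.card V - 1, by omega⟩
    have hUe : (Finset.univ \ ((∅ : Finset V) ∪ ∅)) = Finset.univ := by simp
    have hVne : ((Finset.univ : Finset V) \ (∅ ∪ ∅)).Nonempty := by
      rw [hUe, ← Finset.card_pos, Finset.card_univ]
      omega
    obtain ⟨u0, hu0⟩ := id hVne
    have hcard0 : ((Finset.univ : Finset V) \ (∅ ∪ ∅)).card = m + 1 := by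
      rw [hUe, Finset.card_univ, hm]
    have hcardL : ∀ x : V, ((Finset.univ : Finset V) \ (insert x ∅ ∪ ∅)).card = m := by
      intro x
      rw [sdiffL, card_erase_of_mem (by simp), hcard0]
      omega
    have hcardR : ∀ x : V, ((Finset.univ : Finset V) \ (∅ ∪ insert x ∅)).card = m := by
      intro x
      rw [sdiffR, card_erase_of_mem (by simp), hcard0]
      omega
    have hbalA : balA G = (Finset.univ \ ((∅ : Finset V) ∪ ∅)).inf' hVne
        (fun v => gameVal G m false (insert v ∅) ∅) := by
      rw [balA, hm, gameVal_true_eq G hVne]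
    have hbalI : balI G = (Finset.univ \ ((∅ : Finset V) ∪ ∅)).sup' hVne
        (fun v => gameVal G m true ∅ (insert v ∅)) := by
      rw [balI, hm, gameVal_false_eq G hVne]
    have hbalA' : gameVal G (m+1) true ∅ ∅ = balA G := by rw [balA, hm]
    have hbalI' : gameVal G (m+1) false ∅ ∅ = balI G := by rw [balI, hm]
    constructor
    · intro hev
      have hmodd : ¬ Even m := by
        rw [hm, Nat.even_add_one] at hev
        exact hev
      constructor
      · have h1 : balA G ≤ gameVal G m false (insert u0 ∅) ∅ := by
          rw [hbalA]; exact Finset.inf'_le _ hu0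
        have h2 := (famLower G 0 le_rfl True (fun h => absurd trivial h) m ∅ ∅ u0
          (Finset.notMem_empty u0) (Finset.notMem_empty u0) (hcardL u0)).2
          (by simp [hmodd])
        rw [hbalI'] at h2
        linarith
      · rw [hbalI]
        apply Finset.sup'_le
        intro v hv
        have h2 := ((famUpper G (4*(G.maxDegree:ℤ)) (by linarith) False
          (fun h => absurd h (by simp))
          (fun _ S0 S1 u x => bscore_swap G u x S0 S1) m).1 ∅ ∅ v
          (Finset.notMem_empty v) (Finset.notMem_empty v) (hcardR v)).1
          (by simp [hmodd])
        rw [hbalA'] at h2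
        exact h2
    · intro hodd
      have hmev : Even m := by
        rw [hm] at hodd
        rcases hodd with ⟨j, hj⟩
        exact ⟨j, by omega⟩
      constructor
      · have h1 : balA G ≤ gameVal G m false (insert u0 ∅) ∅ := by
          rw [hbalA]; exact Finset.inf'_le _ hu0
        have h2 := (famLower G (2*(G.maxDegree:ℤ)) (by linarith) False
          (fun _ S0 S1 x => bscore_flip G x S0 S1) m ∅ ∅ u0
          (Finset.notMem_empty u0) (Finset.notMem_empty u0) (hcardL u0)).2
          (by simp [hmev])
        rw [hbalI'] at h2
        linarith
      · rw [hbalI]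
        apply Finset.sup'_le
        intro v hv
        have h2 := ((famUpper G (2*(G.maxDegree:ℤ)) (by linarith) True
          (fun _ S0 S1 x => bscore_flip2 G x S0 S1)
          (fun h => absurd trivial h) m).1 ∅ ∅ v
          (Finset.notMem_empty v) (Finset.notMem_empty v) (hcardR v)).1
          (by simp [hmev])
        rw [hbalA'] at h2
        exact h2
end

section
/- If G and H are finite simple graphs on the same vertex set such that the symmetric difference of their edge sets has size k, then |b^A_g(G) − b^A_g(H)| ≤ k and |b^I_g(G) − b^I_g(H)| ≤ k. -/
open SimpleGraph

lemma abs_ncard_sub_ncard_le {α : Type*} [Fintype α] [DecidableEq α] (A B : Set α) :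
    |(A.ncard : ℤ) - B.ncard| ≤ ((symmDiff A B).ncard : ℤ) := by
  have hAB : A ⊆ B ∪ symmDiff A B := by
    intro x hx
    by_cases hxB : x ∈ B
    · exact Or.inl hxB
    · exact Or.inr (Or.inl ⟨hx, hxB⟩)
  have hBA : B ⊆ A ∪ symmDiff A B := by
    intro x hx
    by_cases hxA : x ∈ A
    · exact Or.inl hxA
    · exact Or.inr (Or.inr ⟨hx, hxA⟩)
  have h1 : A.ncard ≤ B.ncard + (symmDiff A B).ncard :=
    le_trans (Set.ncard_le_ncard hAB (Set.toFinite _)) (Set.ncard_union_le _ _)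
  have h2 : B.ncard ≤ A.ncard + (symmDiff A B).ncard :=
    le_trans (Set.ncard_le_ncard hBA (Set.toFinite _)) (Set.ncard_union_le _ _)
  rw [abs_sub_le_iff]
  omega

lemma bscore_lip {V : Type*} [Fintype V] (G H : SimpleGraph V) (S0 S1 : Set V)
    (hd : Disjoint S0 S1) :
    |bscore G S0 S1 - bscore H S0 S1| ≤ ((symmDiff G.edgeSet H.edgeSet).ncard : ℤ) := by
  classical
  set C : Set (Sym2 V) := {e | ∃ u ∈ S0, ∃ v ∈ S1, e = s(u, v)} with hC
  set D : Set (Sym2 V) := {e | (∃ u ∈ S0, ∃ v ∈ S0, e = s(u, v)) ∨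
      (∃ u ∈ S1, ∃ v ∈ S1, e = s(u, v))} with hD
  have hCD : C ∩ D = ∅ := by
    ext e
    simp only [Set.mem_inter_iff, Set.mem_setOf_eq, Set.mem_empty_iff_false, iff_false,
      not_and, hC, hD]
    rintro ⟨u, hu, v, hv, rfl⟩ (⟨a, ha, b, hb, hab⟩ | ⟨a, ha, b, hb, hab⟩) <;>
      rw [Sym2.eq_iff] at hab <;>
      rcases hab with ⟨rfl, rfl⟩ | ⟨rfl, rfl⟩
    · exact hd.ne_of_mem hb hv rfl
    · exact hd.ne_of_mem ha hv rfl
    · exact hd.ne_of_mem hu ha rfl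
    · exact hd.ne_of_mem hu hb rfl
  have hGC : {e ∈ G.edgeSet | ∃ u ∈ S0, ∃ v ∈ S1, e = s(u, v)} = G.edgeSet ∩ C := rfl
  have hHC : {e ∈ H.edgeSet | ∃ u ∈ S0, ∃ v ∈ S1, e = s(u, v)} = H.edgeSet ∩ C := rfl
  have hGD : {e ∈ G.edgeSet | (∃ u ∈ S0, ∃ v ∈ S0, e = s(u, v)) ∨
      (∃ u ∈ S1, ∃ v ∈ S1, e = s(u, v))} = G.edgeSet ∩ D := rfl
  have hHD : {e ∈ H.edgeSet | (∃ u ∈ S0, ∃ v ∈ S0, e = s(u, v)) ∨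
      (∃ u ∈ S1, ∃ v ∈ S1, e = s(u, v))} = H.edgeSet ∩ D := rfl
  have hsC : symmDiff (G.edgeSet ∩ C) (H.edgeSet ∩ C) = symmDiff G.edgeSet H.edgeSet ∩ C := by
    ext e
    simp only [Set.mem_inter_iff, symmDiff_def, Set.sup_eq_union, Set.mem_union,
      Set.mem_diff]
    tauto
  have hsD : symmDiff (G.edgeSet ∩ D) (H.edgeSet ∩ D) = symmDiff G.edgeSet H.edgeSet ∩ D := by
    ext e
    simp only [Set.mem_inter_iff, symmDiff_def, Set.sup_eq_union, Set.mem_union,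
      Set.mem_diff]
    tauto
  have h1 := abs_ncard_sub_ncard_le (G.edgeSet ∩ C) (H.edgeSet ∩ C)
  have h2 := abs_ncard_sub_ncard_le (G.edgeSet ∩ D) (H.edgeSet ∩ D)
  rw [hsC] at h1
  rw [hsD] at h2
  have hdis : Disjoint (symmDiff G.edgeSet H.edgeSet ∩ C) (symmDiff G.edgeSet H.edgeSet ∩ D) := by
    rw [Set.disjoint_iff_inter_eq_empty]
    rw [show (symmDiff G.edgeSet H.edgeSet ∩ C) ∩ (symmDiff G.edgeSet H.edgeSet ∩ D)
        = symmDiff G.edgeSet H.edgeSet ∩ (C ∩ D) by ext e; simp; tauto, hCD]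
    simp
  have hsum : (symmDiff G.edgeSet H.edgeSet ∩ C).ncard + (symmDiff G.edgeSet H.edgeSet ∩ D).ncard
      ≤ (symmDiff G.edgeSet H.edgeSet).ncard := by
    rw [← Set.ncard_union_eq hdis (Set.toFinite _) (Set.toFinite _)]
    exact Set.ncard_le_ncard (by intro x hx; rcases hx with ⟨h, _⟩ | ⟨h, _⟩ <;> exact h)
      (Set.toFinite _)
  unfold bscore
  rw [hGC, hHC, hGD, hHD]
  have := abs_sub_abs_le_abs_sub ((G.edgeSet ∩ C).ncard : ℤ) ((H.edgeSet ∩ C).ncard : ℤ)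
  rw [abs_le] at h1 h2 ⊢
  constructor <;> push_cast at hsum ⊢ <;> linarith [h1.1, h1.2, h2.1, h2.2]

lemma abs_inf'_sub_inf'_le {α : Type*} {s : Finset α} (h : s.Nonempty) (f g : α → ℤ) (k : ℤ)
    (hfg : ∀ v ∈ s, |f v - g v| ≤ k) : |s.inf' h f - s.inf' h g| ≤ k := by
  rw [abs_sub_le_iff]
  constructor
  · obtain ⟨v, hv, hvg⟩ := s.exists_mem_eq_inf' h g
    have h1 : s.inf' h f ≤ f v := Finset.inf'_le _ hv
    have h2 := (abs_sub_le_iff.mp (hfg v hv)).1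
    rw [hvg]; linarith
  · obtain ⟨v, hv, hvf⟩ := s.exists_mem_eq_inf' h f
    have h1 : s.inf' h g ≤ g v := Finset.inf'_le _ hv
    have h2 := (abs_sub_le_iff.mp (hfg v hv)).2
    rw [hvf]; linarith

lemma abs_sup'_sub_sup'_le {α : Type*} {s : Finset α} (h : s.Nonempty) (f g : α → ℤ) (k : ℤ)
    (hfg : ∀ v ∈ s, |f v - g v| ≤ k) : |s.sup' h f - s.sup' h g| ≤ k := by
  rw [abs_sub_le_iff]
  constructor
  · obtain ⟨v, hv, hvf⟩ := s.exists_mem_eq_sup' h f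
    have h1 : g v ≤ s.sup' h g := Finset.le_sup' _ hv
    have h2 := (abs_sub_le_iff.mp (hfg v hv)).1
    rw [hvf]; linarith
  · obtain ⟨v, hv, hvg⟩ := s.exists_mem_eq_sup' h g
    have h1 : f v ≤ s.sup' h f := Finset.le_sup' _ hv
    have h2 := (abs_sub_le_iff.mp (hfg v hv)).2
    rw [hvg]; linarith

lemma gameVal_lip {V : Type*} [Fintype V] (G H : SimpleGraph V) :
    ∀ (n : ℕ) (t : Bool) (S0 S1 : Finset V), Disjoint S0 S1 →
      |gameVal G n t S0 S1 - gameVal H n t S0 S1|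
        ≤ ((symmDiff G.edgeSet H.edgeSet).ncard : ℤ) := by
  classical
  intro n
  induction n with
  | zero =>
    intro t S0 S1 hd
    simp only [gameVal]
    exact bscore_lip G H _ _ (by exact_mod_cast Finset.disjoint_coe.mpr hd)
  | succ m ih =>
    intro t S0 S1 hd
    simp only [gameVal]
    by_cases h : (Finset.univ \ (S0 ∪ S1)).Nonempty
    · rw [dif_pos h, dif_pos h]
      cases t with
      | true =>
        simp only [if_true]
        apply abs_inf'_sub_inf'_le
        intro v hv
        simp only [Finset.mem_sdiff, Finset.mem_union] at hv
        exact ih false (insert v S0) S1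
          (Finset.disjoint_insert_left.mpr ⟨fun hc => hv.2 (Or.inr hc), hd⟩)
      | false =>
        simp only [Bool.false_eq_true, if_false]
        apply abs_sup'_sub_sup'_le
        intro v hv
        simp only [Finset.mem_sdiff, Finset.mem_union] at hv
        exact ih true S0 (insert v S1)
          (Finset.disjoint_insert_right.mpr ⟨fun hc => hv.2 (Or.inl hc), hd⟩)
    · rw [dif_neg h, dif_neg h]
      exact bscore_lip G H _ _ (by exact_mod_cast Finset.disjoint_coe.mpr hd)

theorem statement_3 {V : Type*} [Fintype V] (G H : SimpleGraph V) (k : ℕ)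
    (hk : (symmDiff G.edgeSet H.edgeSet).ncard = k) :
    |balA G - balA H| ≤ (k : ℤ) ∧ |balI G - balI H| ≤ (k : ℤ) := by
  subst hk
  exact ⟨gameVal_lip G H _ true ∅ ∅ (by simp), gameVal_lip G H _ false ∅ ∅ (by simp)⟩
end

section
/- For all integers k ≥ 0 and n ≥ max(2k, 1), there exists a finite simple graph G of order n such that b^A_g(G) = k and b^I_g(G) = k. -/
open SimpleGraph

namespace BalanceAux

open Finset

def piF (n : ℕ) (v : Fin n) : Fin n :=
  if _h2 : (v : ℕ) % 2 = 0 then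
    (if h3 : (v : ℕ) + 1 < n then ⟨(v : ℕ) + 1, h3⟩ else v)
  else ⟨(v : ℕ) - 1, lt_of_le_of_lt (Nat.sub_le _ _) v.isLt⟩

lemma piF_cases {n : ℕ} (v : Fin n) :
    ((v : ℕ) % 2 = 0 ∧ (v : ℕ) + 1 < n ∧ (piF n v : ℕ) = (v : ℕ) + 1) ∨
    ((v : ℕ) % 2 = 0 ∧ (v : ℕ) + 1 = n ∧ (piF n v : ℕ) = (v : ℕ)) ∨
    ((v : ℕ) % 2 = 1 ∧ (piF n v : ℕ) = (v : ℕ) - 1) := by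
  have hv := v.isLt
  unfold piF
  split_ifs with h1 h2 <;> simp <;> omega

lemma piF_invol {n : ℕ} (v : Fin n) : piF n (piF n v) = v := by
  have h1 := piF_cases v
  have h2 := piF_cases (piF n v)
  have := v.isLt
  rcases h1 with h | h | h <;> rcases h2 with g | g | g <;> (apply Fin.ext; omega)

lemma piF_inj {n : ℕ} {a b : Fin n} (h : piF n a = piF n b) : a = b := by
  rw [← piF_invol (n := n) a, h, piF_invol]

def MG (n k : ℕ) : SimpleGraph (Fin n) :=
  SimpleGraph.fromRel (fun u v => (v : ℕ) = (u : ℕ) + 1 ∧ (v : ℕ) % 2 = 1 ∧ (v : ℕ) < 2 * k)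

lemma adj_iff {n k : ℕ} (hkn : 2 * k ≤ n) {a b : Fin n} :
    (MG n k).Adj a b ↔ (a : ℕ) < 2 * k ∧ b = piF n a := by
  have hca := piF_cases a
  have ha := a.isLt
  have hb := b.isLt
  simp only [MG, SimpleGraph.fromRel_adj]
  constructor
  · rintro ⟨hne, h | h⟩
    · have hne' : (a : ℕ) ≠ (b : ℕ) := fun e => hne (Fin.ext e)
      refine ⟨by omega, Fin.ext ?_⟩
      rcases hca with g | g | g <;> omega
    · refine ⟨by omega, Fin.ext ?_⟩
      rcases hca with g | g | g <;> omega
  · rintro ⟨h2k, rfl⟩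
    rcases hca with g | g | g
    · exact ⟨fun e => by have := congrArg Fin.val e; omega,
        Or.inl ⟨by omega, by omega, by omega⟩⟩
    · exact absurd rfl (by omega : ¬ (0:ℕ) = 0)
    · exact ⟨fun e => by have := congrArg Fin.val e; omega,
        Or.inr ⟨by omega, by omega, by omega⟩⟩

open Finset

lemma edgeSet_eq {n k : ℕ} (hkn : 2 * k ≤ n) :
    (MG n k).edgeSet = Set.range (fun i : Fin k =>
      s((⟨2 * (i : ℕ), by have := i.isLt; omega⟩ : Fin n),
        (⟨2 * (i : ℕ) + 1, by have := i.isLt; omega⟩ : Fin n))) := by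
  ext e
  induction e using Sym2.ind with
  | _ a b =>
    simp only [SimpleGraph.mem_edgeSet, Set.mem_range]
    constructor
    · intro hadj
      obtain ⟨h2k, rfl⟩ := (adj_iff hkn).mp hadj
      have ha := a.isLt
      rcases piF_cases a with g | g | g
      · refine ⟨⟨(a : ℕ) / 2, by omega⟩, ?_⟩
        have e1 : (⟨2 * ((a : ℕ) / 2), by omega⟩ : Fin n) = a := by
          apply Fin.ext; show 2 * ((a : ℕ) / 2) = (a : ℕ); omega
        have e2 : (⟨2 * ((a : ℕ) / 2) + 1, by omega⟩ : Fin n) = piF n a := by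
          apply Fin.ext; show 2 * ((a : ℕ) / 2) + 1 = ((piF n a : ℕ)); omega
        show s((⟨2 * ((a : ℕ) / 2), by omega⟩ : Fin n), (⟨2 * ((a : ℕ) / 2) + 1, by omega⟩ : Fin n)) = _
        rw [e1, e2]
      · omega
      · refine ⟨⟨(a : ℕ) / 2, by omega⟩, ?_⟩
        have e1 : (⟨2 * ((a : ℕ) / 2), by omega⟩ : Fin n) = piF n a := by
          apply Fin.ext; show 2 * ((a : ℕ) / 2) = ((piF n a : ℕ)); omega
        have e2 : (⟨2 * ((a : ℕ) / 2) + 1, by omega⟩ : Fin n) = a := by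
          apply Fin.ext; show 2 * ((a : ℕ) / 2) + 1 = (a : ℕ); omega
        show s((⟨2 * ((a : ℕ) / 2), by omega⟩ : Fin n), (⟨2 * ((a : ℕ) / 2) + 1, by omega⟩ : Fin n)) = _
        rw [e1, e2, Sym2.eq_swap]
    · rintro ⟨i, hi⟩
      have hil := i.isLt
      have hadj : (MG n k).Adj (⟨2 * (i : ℕ), by omega⟩ : Fin n)
          (⟨2 * (i : ℕ) + 1, by omega⟩ : Fin n) := by
        rw [adj_iff hkn]
        constructor
        · show 2 * (i : ℕ) < 2 * k; omega
        · have hx : ((⟨2 * (i : ℕ), by omega⟩ : Fin n) : ℕ) = 2 * (i : ℕ) := rfl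
          rcases piF_cases (⟨2 * (i : ℕ), by omega⟩ : Fin n) with g | g | g <;> rw [hx] at g
          · apply Fin.ext
            show 2 * (i : ℕ) + 1 = (piF n ⟨2 * (i : ℕ), by omega⟩ : ℕ)
            omega
          · omega
          · omega
      exact ((MG n k).mem_edgeSet).mp (hi ▸ ((MG n k).mem_edgeSet).mpr hadj)


lemma edgeSet_ncard {n k : ℕ} (hkn : 2 * k ≤ n) : (MG n k).edgeSet.ncard = k := by
  rw [edgeSet_eq hkn, ← Set.image_univ, Set.ncard_image_of_injective _ ?_, Set.ncard_univ]
  · simp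
  · intro i j hij
    simp only [Sym2.eq_iff] at hij
    have hi := i.isLt; have hj := j.isLt
    apply Fin.ext
    rcases hij with ⟨h1, _⟩ | ⟨h1, h2⟩
    · have := congrArg Fin.val h1
      simp only [Fin.val_mk] at this
      omega
    · have e1 := congrArg Fin.val h1
      have e2 := congrArg Fin.val h2
      simp only [Fin.val_mk] at e1 e2
      omega

def Split {n : ℕ} (S0 S1 : Finset (Fin n)) (a b : Fin n) : Prop :=
  (a ∈ S0 ∧ b ∈ S1) ∨ (a ∈ S1 ∧ b ∈ S0)

lemma bscore_eq {n k : ℕ} (hkn : 2 * k ≤ n) (S0 S1 : Finset (Fin n))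
    (hdisj : ∀ v, v ∈ S0 → v ∉ S1)
    (hsplit : ∀ a b : Fin n, (MG n k).Adj a b → Split S0 S1 a b) :
    bscore (MG n k) ↑S0 ↑S1 = (k : ℤ) := by
  have h1 : {e ∈ (MG n k).edgeSet | ∃ u ∈ (S0 : Set (Fin n)), ∃ v ∈ (S1 : Set (Fin n)),
      e = s(u, v)} = (MG n k).edgeSet := by
    ext e
    simp only [Set.mem_setOf_eq]
    constructor
    · exact fun h => h.1
    · intro he
      refine ⟨he, ?_⟩
      induction e using Sym2.ind with
      | _ a b =>
        have hadj : (MG n k).Adj a b := ((MG n k).mem_edgeSet).mp he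
        rcases hsplit a b hadj with ⟨h0, h1⟩ | ⟨h1, h0⟩
        · exact ⟨a, by simpa using h0, b, by simpa using h1, rfl⟩
        · exact ⟨b, by simpa using h0, a, by simpa using h1, Sym2.eq_swap⟩
  have h2 : {e ∈ (MG n k).edgeSet | (∃ u ∈ (S0 : Set (Fin n)), ∃ v ∈ (S0 : Set (Fin n)),
      e = s(u, v)) ∨ (∃ u ∈ (S1 : Set (Fin n)), ∃ v ∈ (S1 : Set (Fin n)), e = s(u, v))} = ∅ := by
    ext e
    simp only [Set.mem_setOf_eq, Set.mem_empty_iff_false, iff_false, not_and, not_or]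
    intro he
    have key : ∀ u v : Fin n, e = s(u, v) → Split S0 S1 u v := by
      intro u v hev
      have hadj : (MG n k).Adj u v := ((MG n k).mem_edgeSet).mp (hev ▸ he)
      exact hsplit u v hadj
    constructor
    · rintro ⟨u, hu, v, hv, hev⟩
      simp only [Finset.mem_coe] at hu hv
      rcases key u v hev with ⟨_, hv1⟩ | ⟨hu1, _⟩
      · exact hdisj v hv hv1
      · exact hdisj u hu hu1
    · rintro ⟨u, hu, v, hv, hev⟩
      simp only [Finset.mem_coe] at hu hv
      rcases key u v hev with ⟨hu0, _⟩ | ⟨_, hv0⟩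
      · exact hdisj u hu0 hu
      · exact hdisj v hv0 hv
  rw [bscore, h1, h2]
  rw [edgeSet_ncard hkn]
  simp

lemma bscore_le {n k : ℕ} (hkn : 2 * k ≤ n) (S0 S1 : Set (Fin n)) :
    bscore (MG n k) S0 S1 ≤ (k : ℤ) := by
  have hsub : {e ∈ (MG n k).edgeSet | ∃ u ∈ S0, ∃ v ∈ S1, e = s(u, v)} ⊆ (MG n k).edgeSet :=
    fun e he => he.1
  have hle := Set.ncard_le_ncard hsub (Set.toFinite _)
  rw [edgeSet_ncard hkn] at hle
  have hnn : (0 : ℤ) ≤ ({e ∈ (MG n k).edgeSet | (∃ u ∈ S0, ∃ v ∈ S0, e = s(u, v)) ∨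
      (∃ u ∈ S1, ∃ v ∈ S1, e = s(u, v))}.ncard : ℤ) := Int.natCast_nonneg _
  rw [bscore]
  have : (({e ∈ (MG n k).edgeSet | ∃ u ∈ S0, ∃ v ∈ S1, e = s(u, v)}.ncard : ℤ)) ≤ (k : ℤ) := by
    exact_mod_cast hle
  omega


lemma gameVal_zero {V : Type*} [Fintype V] (G : SimpleGraph V) (t : Bool) (S0 S1 : Finset V) :
    gameVal G 0 t S0 S1 = bscore G ↑S0 ↑S1 := rfl

lemma gameVal_true_succ {V : Type*} [Fintype V] (inst : DecidableEq V) (G : SimpleGraph V)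
    (m : ℕ) (S0 S1 : Finset V) :
    gameVal G (m + 1) true S0 S1 =
      if h : (Finset.univ \ (S0 ∪ S1)).Nonempty then
        (Finset.univ \ (S0 ∪ S1)).inf' h fun v => gameVal G m false (insert v S0) S1
      else bscore G ↑S0 ↑S1 := by
  rw [Subsingleton.elim inst (Classical.decEq V)]
  rfl

lemma gameVal_false_succ {V : Type*} [Fintype V] (inst : DecidableEq V) (G : SimpleGraph V)
    (m : ℕ) (S0 S1 : Finset V) :
    gameVal G (m + 1) false S0 S1 =
      if h : (Finset.univ \ (S0 ∪ S1)).Nonempty then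
        (Finset.univ \ (S0 ∪ S1)).sup' h fun v => gameVal G m true S0 (insert v S1)
      else bscore G ↑S0 ↑S1 := by
  rw [Subsingleton.elim inst (Classical.decEq V)]
  rfl

lemma UB {n k : ℕ} (hkn : 2 * k ≤ n) :
    ∀ (m : ℕ) (t : Bool) (S0 S1 : Finset (Fin n)), gameVal (MG n k) m t S0 S1 ≤ (k : ℤ) := by
  intro m
  induction m with
  | zero => intro t S0 S1; rw [gameVal_zero]; exact bscore_le hkn _ _
  | succ m IHm =>
    intro t S0 S1
    cases t
    · rw [gameVal_false_succ inferInstance]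
      split_ifs with h
      · exact Finset.sup'_le _ _ fun v _ => IHm true S0 (insert v S1)
      · exact bscore_le hkn _ _
    · rw [gameVal_true_succ inferInstance]
      split_ifs with h
      · obtain ⟨v, hv⟩ := h
        exact le_trans (Finset.inf'_le _ hv) (IHm false (insert v S0) S1)
      · exact bscore_le hkn _ _


def Inv {n : ℕ} (k : ℕ) (S0 S1 : Finset (Fin n)) : Option (Fin n) → Prop
  | none =>
      (∀ v : Fin n, v ∉ S0 → v ∉ S1 →
        piF n v ∉ S0 ∧ piF n v ∉ S1 ∧ piF n v ≠ v) ∧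
      (∀ a b : Fin n, (MG n k).Adj a b →
        (a ∉ S0 ∧ a ∉ S1 ∧ b ∉ S0 ∧ b ∉ S1) ∨ Split S0 S1 a b)
  | some l =>
      l ∉ S0 ∧ l ∉ S1 ∧ (piF n l = l ∨ piF n l ∈ S1) ∧
      (∀ v : Fin n, v ∉ S0 → v ∉ S1 → v ≠ l →
        piF n v ∉ S0 ∧ piF n v ∉ S1 ∧ piF n v ≠ v ∧ piF n v ≠ l) ∧
      (∀ a b : Fin n, (MG n k).Adj a b →
        (a ∉ S0 ∧ a ∉ S1 ∧ b ∉ S0 ∧ b ∉ S1) ∨ Split S0 S1 a b ∨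
          (a = l ∧ b ∈ S1) ∨ (b = l ∧ a ∈ S1))

lemma mem_free {n : ℕ} {S0 S1 : Finset (Fin n)} {v : Fin n} :
    v ∈ Finset.univ \ (S0 ∪ S1) ↔ v ∉ S0 ∧ v ∉ S1 := by
  simp [not_or]

lemma free_insert_left {n : ℕ} (S0 S1 : Finset (Fin n)) (v : Fin n) :
    Finset.univ \ (insert v S0 ∪ S1) = (Finset.univ \ (S0 ∪ S1)).erase v := by
  ext x
  simp only [Finset.mem_sdiff, Finset.mem_univ, Finset.mem_union, Finset.mem_erase,
    Finset.mem_insert, true_and, not_or]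
  tauto

lemma free_insert_right {n : ℕ} (S0 S1 : Finset (Fin n)) (v : Fin n) :
    Finset.univ \ (S0 ∪ insert v S1) = (Finset.univ \ (S0 ∪ S1)).erase v := by
  ext x
  simp only [Finset.mem_sdiff, Finset.mem_univ, Finset.mem_union, Finset.mem_erase,
    Finset.mem_insert, true_and, not_or]
  tauto


lemma LB {n k : ℕ} (hkn : 2 * k ≤ n) :
    ∀ (m : ℕ) (S0 S1 : Finset (Fin n)) (L : Option (Fin n)),
      (∀ v, v ∈ S0 → v ∉ S1) → Inv k S0 S1 L →
      (Finset.univ \ (S0 ∪ S1)).card = m →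
      (k : ℤ) ≤ gameVal (MG n k) m true S0 S1 := by
  intro m
  induction m using Nat.strong_induction_on with
  | _ m IH =>
  intro S0 S1 L hdisj hInv hcard
  obtain _ | m := m
  · -- terminal state: no free vertices
    have hfree : Finset.univ \ (S0 ∪ S1) = ∅ := Finset.card_eq_zero.mp hcard
    have hnofree : ∀ v : Fin n, v ∉ S0 → v ∉ S1 → False := by
      intro v h0 h1
      have hv : v ∈ Finset.univ \ (S0 ∪ S1) := mem_free.mpr ⟨h0, h1⟩
      rw [hfree] at hv
      exact Finset.notMem_empty v hv
    have hsplit : ∀ a b : Fin n, (MG n k).Adj a b → Split S0 S1 a b := by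
      cases L with
      | none =>
        intro a b hadj
        rcases hInv.2 a b hadj with ⟨fa0, fa1, _, _⟩ | hs
        · exact (hnofree a fa0 fa1).elim
        · exact hs
      | some l => exact (hnofree l hInv.1 hInv.2.1).elim
    rw [gameVal_zero, bscore_eq hkn S0 S1 hdisj hsplit]
  · -- at least one free vertex: A to move
    have hne : (Finset.univ \ (S0 ∪ S1)).Nonempty := by
      rw [← Finset.card_pos, hcard]; omega
    rw [gameVal_true_succ inferInstance, dif_pos hne]
    apply Finset.le_inf'
    intro v hv
    obtain ⟨hv0, hv1⟩ := mem_free.mp hv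
    have hcard1 : (Finset.univ \ (insert v S0 ∪ S1)).card = m := by
      rw [free_insert_left, Finset.card_erase_of_mem hv, hcard]
      omega
    have key : ∀ (w : Fin n) (L' : Option (Fin n)), w ∉ S0 → w ∉ S1 → w ≠ v →
        (∀ u, u ∈ insert v S0 → u ∉ insert w S1) →
        Inv k (insert v S0) (insert w S1) L' →
        (k : ℤ) ≤ gameVal (MG n k) m false (insert v S0) S1 := by
      intro w L' hw0 hw1 hwv hdisj' hInv'
      have hw : w ∈ Finset.univ \ (insert v S0 ∪ S1) := by
        simp only [Finset.mem_sdiff, Finset.mem_univ, Finset.mem_union, Finset.mem_insert,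
          true_and, not_or]
        exact ⟨⟨hwv, hw0⟩, hw1⟩
      obtain _ | m2 := m
      · rw [Finset.card_eq_zero.mp hcard1] at hw
        exact (Finset.notMem_empty w hw).elim
      · rw [gameVal_false_succ inferInstance, dif_pos ⟨w, hw⟩]
        refine le_trans ?_ (Finset.le_sup' _ hw)
        refine IH m2 (by omega) (insert v S0) (insert w S1) L' hdisj' hInv' ?_
        rw [free_insert_right, Finset.card_erase_of_mem hw, hcard1]
        omega
    rcases L with _ | l
    · -- no leftover: A picked v, I answers with its partner
      obtain ⟨hpi, hedge⟩ := hInv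
      obtain ⟨hw0, hw1, hwv⟩ := hpi v hv0 hv1
      apply key (piF n v) none hw0 hw1 hwv
      · intro u hu
        simp only [Finset.mem_insert, not_or]
        rcases Finset.mem_insert.mp hu with rfl | hu
        · exact ⟨fun e => hwv e.symm, hv1⟩
        · exact ⟨fun e => hw0 (e ▸ hu), hdisj u hu⟩
      · constructor
        · intro x hx0 hx1
          simp only [Finset.mem_insert, not_or] at hx0 hx1
          obtain ⟨hxv, hx0⟩ := hx0
          obtain ⟨hxw, hx1⟩ := hx1
          obtain ⟨p0, p1, px⟩ := hpi x hx0 hx1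
          simp only [Finset.mem_insert, not_or]
          refine ⟨⟨?_, p0⟩, ⟨?_, p1⟩, px⟩
          · intro e
            exact hxw (by rw [← e, piF_invol] at hwv ⊢ <;> skip) |>.elim
          · intro e
            exact hxv (piF_inj e)
        · intro a b hadj
          have hb := ((adj_iff hkn).mp hadj).2
          have ha2 := ((adj_iff hkn).mp hadj.symm).2
          rcases hedge a b hadj with ⟨fa0, fa1, fb0, fb1⟩ | hs
          · by_cases hav : a = v
            · subst hav
              refine Or.inr (Or.inl ⟨Finset.mem_insert_self _ _, ?_⟩)
              rw [hb]; exact Finset.mem_insert_self _ _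
            · by_cases hbv : b = v
              · subst hbv
                refine Or.inr (Or.inr ⟨?_, Finset.mem_insert_self _ _⟩)
                rw [ha2]; exact Finset.mem_insert_self _ _
              · have haw : a ≠ piF n v := by
                  intro e
                  rw [e, piF_invol] at hb
                  exact hbv hb
                have hbw : b ≠ piF n v := by
                  intro e
                  rw [e, piF_invol] at ha2
                  exact hav ha2
                refine Or.inl ⟨?_, ?_, ?_, ?_⟩ <;>
                  simp only [Finset.mem_insert, not_or]
                · exact ⟨hav, fa0⟩
                · exact ⟨haw, fa1⟩
                · exact ⟨hbv, fb0⟩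
                · exact ⟨hbw, fb1⟩
          · rcases hs with ⟨h0, h1⟩ | ⟨h1, h0⟩
            · exact Or.inr (Or.inl ⟨Finset.mem_insert_of_mem h0, Finset.mem_insert_of_mem h1⟩)
            · exact Or.inr (Or.inr ⟨Finset.mem_insert_of_mem h1, Finset.mem_insert_of_mem h0⟩)
    · obtain ⟨hl0, hl1, hlpi, hpi, hedge⟩ := hInv
      by_cases hvl : v = l
      · -- A picked the leftover
        subst hvl
        obtain _ | m2 := m
        · -- game over after this move
          rw [gameVal_zero]
          have hfree1 : Finset.univ \ (insert v S0 ∪ S1) = ∅ := Finset.card_eq_zero.mp hcard1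
          have hnofree : ∀ u : Fin n, u ∉ insert v S0 → u ∉ S1 → False := by
            intro u h0 h1
            have hu : u ∈ Finset.univ \ (insert v S0 ∪ S1) := by
              simp only [Finset.mem_sdiff, Finset.mem_univ, Finset.mem_union, true_and, not_or]
              exact ⟨h0, h1⟩
            rw [hfree1] at hu
            exact Finset.notMem_empty u hu
          have hdisj' : ∀ u, u ∈ insert v S0 → u ∉ S1 := by
            intro u hu
            rcases Finset.mem_insert.mp hu with rfl | hu
            · exact hl1
            · exact hdisj u hu
          have hsplit : ∀ a b : Fin n, (MG n k).Adj a b → Split (insert v S0) S1 a b := by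
            intro a b hadj
            have hb := ((adj_iff hkn).mp hadj).2
            have ha2 := ((adj_iff hkn).mp hadj.symm).2
            rcases hedge a b hadj with ⟨fa0, fa1, fb0, fb1⟩ | hs | ⟨hal, hbs⟩ | ⟨hbl, has⟩
            · have hal : a ≠ v := by
                intro e
                rcases hlpi with hp | hp
                · rw [e, hp] at hb; exact hadj.ne' (hb.trans e.symm)
                · rw [e] at hb; exact fb1 (hb ▸ hp)
              have hbl : b ≠ v := by
                intro e
                rcases hlpi with hp | hp
                · rw [e, hp] at ha2; exact hadj.ne (ha2.trans e.symm)
                · rw [e] at ha2; exact fa1 (ha2 ▸ hp)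
              have ham : a ∉ insert v S0 := by
                simp only [Finset.mem_insert, not_or]; exact ⟨hal, fa0⟩
              exact (hnofree a ham fa1).elim
            · rcases hs with ⟨h0, h1⟩ | ⟨h1, h0⟩
              · exact Or.inl ⟨Finset.mem_insert_of_mem h0, h1⟩
              · exact Or.inr ⟨h1, Finset.mem_insert_of_mem h0⟩
            · exact Or.inl ⟨hal ▸ Finset.mem_insert_self _ _, hbs⟩
            · exact Or.inr ⟨has, hbl ▸ Finset.mem_insert_self _ _⟩
          rw [bscore_eq hkn _ _ hdisj' hsplit]
        · -- I answers by opening a fresh pair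
          have hne1 : (Finset.univ \ (insert v S0 ∪ S1)).Nonempty := by
            rw [← Finset.card_pos, hcard1]; omega
          obtain ⟨u, hu⟩ := hne1
          have hu' := hu
          simp only [Finset.mem_sdiff, Finset.mem_univ, Finset.mem_union, Finset.mem_insert,
            true_and, not_or] at hu'
          obtain ⟨⟨hul, hu0⟩, hu1⟩ := hu'
          obtain ⟨q0, q1, qu, ql⟩ := hpi u hu0 hu1 hul
          rw [gameVal_false_succ inferInstance, dif_pos ⟨u, hu⟩]
          refine le_trans ?_ (Finset.le_sup' _ hu)
          refine IH m2 (by omega) (insert v S0) (insert u S1) (some (piF n u)) ?_ ?_ ?_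
          · intro x hx
            simp only [Finset.mem_insert, not_or]
            rcases Finset.mem_insert.mp hx with rfl | hx
            · exact ⟨fun e => hul e.symm, hl1⟩
            · exact ⟨fun e => hu0 (e ▸ hx), hdisj x hx⟩
          · refine ⟨?_, ?_, ?_, ?_, ?_⟩
            · simp only [Finset.mem_insert, not_or]; exact ⟨ql, q0⟩
            · simp only [Finset.mem_insert, not_or]; exact ⟨qu, q1⟩
            · right; rw [piF_invol]; exact Finset.mem_insert_self _ _
            · intro x hx0 hx1 hxw
              simp only [Finset.mem_insert, not_or] at hx0 hx1
              obtain ⟨hxl, hx0⟩ := hx0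
              obtain ⟨hxu, hx1⟩ := hx1
              obtain ⟨p0, p1, px, pl⟩ := hpi x hx0 hx1 hxl
              simp only [Finset.mem_insert, not_or]
              refine ⟨⟨pl, p0⟩, ⟨?_, p1⟩, px, ?_⟩
              · intro e
                apply hxw
                have := congrArg (piF n) e
                rwa [piF_invol] at this
              · intro e
                exact hxu (piF_inj e)
            · intro a b hadj
              have hb := ((adj_iff hkn).mp hadj).2
              have ha2 := ((adj_iff hkn).mp hadj.symm).2
              rcases hedge a b hadj with ⟨fa0, fa1, fb0, fb1⟩ | hs | ⟨hal, hbs⟩ | ⟨hbl, has⟩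
              · have hal : a ≠ v := by
                  intro e
                  rcases hlpi with hp | hp
                  · rw [e, hp] at hb; exact hadj.ne' (hb.trans e.symm)
                  · rw [e] at hb; exact fb1 (hb ▸ hp)
                have hbl : b ≠ v := by
                  intro e
                  rcases hlpi with hp | hp
                  · rw [e, hp] at ha2; exact hadj.ne (ha2.trans e.symm)
                  · rw [e] at ha2; exact fa1 (ha2 ▸ hp)
                by_cases hau : a = u
                · refine Or.inr (Or.inr (Or.inr ⟨?_, ?_⟩))
                  · rw [hb, hau]
                  · rw [hau]; exact Finset.mem_insert_self _ _
                · by_cases hbu : b = u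
                  · refine Or.inr (Or.inr (Or.inl ⟨?_, ?_⟩))
                    · rw [ha2, hbu]
                    · rw [hbu]; exact Finset.mem_insert_self _ _
                  · have haw : a ≠ piF n u := by
                      intro e
                      rw [e, piF_invol] at hb
                      exact hbu hb
                    have hbw : b ≠ piF n u := by
                      intro e
                      rw [e, piF_invol] at ha2
                      exact hau ha2
                    refine Or.inl ⟨?_, ?_, ?_, ?_⟩ <;>
                      simp only [Finset.mem_insert, not_or]
                    · exact ⟨hal, fa0⟩
                    · exact ⟨hau, fa1⟩
                    · exact ⟨hbl, fb0⟩
                    · exact ⟨hbu, fb1⟩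
              · rcases hs with ⟨h0, h1⟩ | ⟨h1, h0⟩
                · exact Or.inr (Or.inl (Or.inl ⟨Finset.mem_insert_of_mem h0,
                    Finset.mem_insert_of_mem h1⟩))
                · exact Or.inr (Or.inl (Or.inr ⟨Finset.mem_insert_of_mem h1,
                    Finset.mem_insert_of_mem h0⟩))
              · exact Or.inr (Or.inl (Or.inl ⟨hal ▸ Finset.mem_insert_self _ _,
                  Finset.mem_insert_of_mem hbs⟩))
              · exact Or.inr (Or.inl (Or.inr ⟨Finset.mem_insert_of_mem has,
                  hbl ▸ Finset.mem_insert_self _ _⟩))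
          · rw [free_insert_right, Finset.card_erase_of_mem hu, hcard1]
            omega
      · -- v is not the leftover: I answers with the partner of v
        obtain ⟨hw0, hw1, hwv, hwl⟩ := hpi v hv0 hv1 hvl
        apply key (piF n v) (some l) hw0 hw1 hwv
        · intro u hu
          simp only [Finset.mem_insert, not_or]
          rcases Finset.mem_insert.mp hu with rfl | hu
          · exact ⟨fun e => hwv e.symm, hv1⟩
          · exact ⟨fun e => hw0 (e ▸ hu), hdisj u hu⟩
        · refine ⟨?_, ?_, ?_, ?_, ?_⟩
          · simp only [Finset.mem_insert, not_or]
            exact ⟨fun e => hvl e.symm, hl0⟩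
          · simp only [Finset.mem_insert, not_or]
            exact ⟨fun e => hwl e.symm, hl1⟩
          · rcases hlpi with hp | hp
            · exact Or.inl hp
            · exact Or.inr (Finset.mem_insert_of_mem hp)
          · intro x hx0 hx1 hxl
            simp only [Finset.mem_insert, not_or] at hx0 hx1
            obtain ⟨hxv, hx0⟩ := hx0
            obtain ⟨hxw, hx1⟩ := hx1
            obtain ⟨p0, p1, px, pl⟩ := hpi x hx0 hx1 hxl
            simp only [Finset.mem_insert, not_or]
            refine ⟨⟨?_, p0⟩, ⟨?_, p1⟩, px, pl⟩
            · intro e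
              apply hxw
              have := congrArg (piF n) e
              rwa [piF_invol] at this
            · intro e
              exact hxv (piF_inj e)
          · intro a b hadj
            have hb := ((adj_iff hkn).mp hadj).2
            have ha2 := ((adj_iff hkn).mp hadj.symm).2
            rcases hedge a b hadj with ⟨fa0, fa1, fb0, fb1⟩ | hs | ⟨hal, hbs⟩ | ⟨hbl, has⟩
            · by_cases hav : a = v
              · refine Or.inr (Or.inl (Or.inl ⟨?_, ?_⟩))
                · rw [hav]; exact Finset.mem_insert_self _ _
                · rw [hb, hav]; exact Finset.mem_insert_self _ _
              · by_cases hbv : b = v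
                · refine Or.inr (Or.inl (Or.inr ⟨?_, ?_⟩))
                  · rw [ha2, hbv]; exact Finset.mem_insert_self _ _
                  · rw [hbv]; exact Finset.mem_insert_self _ _
                · have haw : a ≠ piF n v := by
                    intro e
                    rw [e, piF_invol] at hb
                    exact hbv hb
                  have hbw : b ≠ piF n v := by
                    intro e
                    rw [e, piF_invol] at ha2
                    exact hav ha2
                  refine Or.inl ⟨?_, ?_, ?_, ?_⟩ <;>
                    simp only [Finset.mem_insert, not_or]
                  · exact ⟨hav, fa0⟩
                  · exact ⟨haw, fa1⟩
                  · exact ⟨hbv, fb0⟩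
                  · exact ⟨hbw, fb1⟩
            · rcases hs with ⟨h0, h1⟩ | ⟨h1, h0⟩
              · exact Or.inr (Or.inl (Or.inl ⟨Finset.mem_insert_of_mem h0,
                  Finset.mem_insert_of_mem h1⟩))
              · exact Or.inr (Or.inl (Or.inr ⟨Finset.mem_insert_of_mem h1,
                  Finset.mem_insert_of_mem h0⟩))
            · exact Or.inr (Or.inr (Or.inl ⟨hal, Finset.mem_insert_of_mem hbs⟩))
            · exact Or.inr (Or.inr (Or.inr ⟨hbl, Finset.mem_insert_of_mem has⟩))


lemma balA_eq {n k : ℕ} (hkn : 2 * k ≤ n) (hn : 1 ≤ n) : balA (MG n k) = (k : ℤ) := by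
  have hcardV : Fintype.card (Fin n) = n := Fintype.card_fin n
  rw [balA, hcardV]
  refine le_antisymm (UB hkn n true ∅ ∅) ?_
  have hcard0 : (Finset.univ \ ((∅ : Finset (Fin n)) ∪ ∅)).card = n := by simp
  rcases Nat.even_or_odd n with hpar | hpar
  · refine LB hkn n ∅ ∅ none (by simp) ⟨?_, ?_⟩ hcard0
    · intro v _ _
      refine ⟨Finset.notMem_empty _, Finset.notMem_empty _, ?_⟩
      have hv := v.isLt
      obtain ⟨c, hc⟩ := hpar
      rcases piF_cases v with g | g | g <;> (intro e; have := congrArg Fin.val e; omega)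
    · intro a b _
      exact Or.inl ⟨Finset.notMem_empty _, Finset.notMem_empty _,
        Finset.notMem_empty _, Finset.notMem_empty _⟩
  · obtain ⟨c, hc⟩ := hpar
    refine LB hkn n ∅ ∅ (some ⟨n - 1, by omega⟩) (by simp)
      ⟨Finset.notMem_empty _, Finset.notMem_empty _, ?_, ?_, ?_⟩ hcard0
    · left
      rcases piF_cases (⟨n - 1, by omega⟩ : Fin n) with g | g | g <;>
        (apply Fin.ext; show (piF n _ : ℕ) = n - 1) <;> simp only [Fin.val_mk] at g <;> omega
    · intro v _ _ hvl
      have hv := v.isLt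
      have hvl' : (v : ℕ) ≠ n - 1 := fun e => hvl (Fin.ext e)
      refine ⟨Finset.notMem_empty _, Finset.notMem_empty _, ?_, ?_⟩
      · rcases piF_cases v with g | g | g <;> (intro e; have := congrArg Fin.val e; omega)
      · rcases piF_cases v with g | g | g <;>
          (intro e; have := congrArg Fin.val e; simp only [Fin.val_mk] at this; omega)
    · intro a b _
      exact Or.inl ⟨Finset.notMem_empty _, Finset.notMem_empty _,
        Finset.notMem_empty _, Finset.notMem_empty _⟩

lemma balI_eq {n k : ℕ} (hkn : 2 * k ≤ n) (hn : 1 ≤ n) : balI (MG n k) = (k : ℤ) := by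
  have hcardV : Fintype.card (Fin n) = n := Fintype.card_fin n
  rw [balI, hcardV]
  refine le_antisymm (UB hkn n false ∅ ∅) ?_
  obtain ⟨m, rfl⟩ : ∃ m, n = m + 1 := ⟨n - 1, by omega⟩
  set N := m + 1 with hN
  rw [gameVal_false_succ inferInstance]
  have hne : (Finset.univ \ ((∅ : Finset (Fin N)) ∪ ∅)).Nonempty := by
    refine ⟨⟨0, by omega⟩, ?_⟩
    simp
  rw [dif_pos hne]
  rcases Nat.even_or_odd N with hpar | hpar
  · -- N even: I opens the pair (0,1); leftover is piF N 0
    obtain ⟨c, hc⟩ := hpar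
    have hN2 : 2 ≤ N := by omega
    set u0 : Fin N := ⟨0, by omega⟩ with hu0
    have hu0mem : u0 ∈ Finset.univ \ ((∅ : Finset (Fin N)) ∪ ∅) := by simp
    refine le_trans ?_ (Finset.le_sup' _ hu0mem)
    have hval0 : (u0 : ℕ) = 0 := rfl
    have hpi0 : (piF N u0 : ℕ) = 1 := by
      rcases piF_cases u0 with g | g | g <;> rw [hval0] at g <;> omega
    have hu0ne : piF N u0 ≠ u0 := by
      intro e; have := congrArg Fin.val e; rw [hpi0] at this; simp [hu0] at this
    refine LB hkn m ∅ (insert u0 ∅) (some (piF N u0)) (by simp)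
      ⟨?_, ?_, ?_, ?_, ?_⟩ ?_
    · exact Finset.notMem_empty _
    · simp only [Finset.mem_insert, not_or]
      exact ⟨hu0ne, Finset.notMem_empty _⟩
    · right; rw [piF_invol]; exact Finset.mem_insert_self _ _
    · intro v hv0 hv1 hvl
      simp only [Finset.mem_insert, not_or] at hv1
      obtain ⟨hvu, _⟩ := hv1
      have hv := v.isLt
      have hpne : piF N v ≠ v := by
        rcases piF_cases v with g | g | g <;> (intro e; have := congrArg Fin.val e; omega)
      refine ⟨Finset.notMem_empty _, ?_, hpne, ?_⟩
      · simp only [Finset.mem_insert, not_or]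
        refine ⟨?_, Finset.notMem_empty _⟩
        intro e
        apply hvl
        have := congrArg (piF N) e
        rwa [piF_invol] at this
      · intro e
        apply hvu
        have := congrArg (piF N) e
        rwa [piF_invol, piF_invol] at this
    · intro a b hadj
      have hb := ((adj_iff hkn).mp hadj).2
      have ha2 := ((adj_iff hkn).mp hadj.symm).2
      by_cases hau : a = u0
      · refine Or.inr (Or.inr (Or.inr ⟨by rw [hb, hau], ?_⟩))
        rw [hau]; exact Finset.mem_insert_self _ _
      · by_cases hbu : b = u0
        · refine Or.inr (Or.inr (Or.inl ⟨by rw [ha2, hbu], ?_⟩))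
          rw [hbu]; exact Finset.mem_insert_self _ _
        · refine Or.inl ⟨Finset.notMem_empty _, ?_, Finset.notMem_empty _, ?_⟩ <;>
            simp only [Finset.mem_insert, not_or]
          · exact ⟨hau, Finset.notMem_empty _⟩
          · exact ⟨hbu, Finset.notMem_empty _⟩
    · have : Finset.univ \ ((∅ : Finset (Fin N)) ∪ insert u0 ∅) = Finset.univ.erase u0 := by
        ext x
        simp only [Finset.mem_sdiff, Finset.mem_univ, Finset.mem_union, Finset.mem_insert,
          Finset.mem_erase, Finset.notMem_empty, true_and, not_or, and_true]
        tauto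
      rw [this, Finset.card_erase_of_mem (Finset.mem_univ _), Finset.card_univ, hcardV]
      omega
  · -- N odd: I takes the unpaired vertex N-1
    obtain ⟨c, hc⟩ := hpar
    set u0 : Fin N := ⟨N - 1, by omega⟩ with hu0
    have hu0mem : u0 ∈ Finset.univ \ ((∅ : Finset (Fin N)) ∪ ∅) := by simp
    refine le_trans ?_ (Finset.le_sup' _ hu0mem)
    refine LB hkn m ∅ (insert u0 ∅) none (by simp) ⟨?_, ?_⟩ ?_
    · intro v hv0 hv1
      simp only [Finset.mem_insert, not_or] at hv1
      obtain ⟨hvu, _⟩ := hv1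
      have hv := v.isLt
      have hvu' : (v : ℕ) ≠ N - 1 := fun e => hvu (Fin.ext e)
      refine ⟨Finset.notMem_empty _, ?_, ?_⟩
      · simp only [Finset.mem_insert, not_or]
        refine ⟨?_, Finset.notMem_empty _⟩
        intro e
        have := congrArg Fin.val e
        simp only [hu0, Fin.val_mk] at this
        rcases piF_cases v with g | g | g <;> omega
      · rcases piF_cases v with g | g | g <;> (intro e; have := congrArg Fin.val e; omega)
    · intro a b hadj
      have hb := ((adj_iff hkn).mp hadj).1
      have hb2 := ((adj_iff hkn).mp hadj.symm).1
      have h2kN : 2 * k ≠ N := by omega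
      refine Or.inl ⟨Finset.notMem_empty _, ?_, Finset.notMem_empty _, ?_⟩ <;>
        simp only [Finset.mem_insert, not_or]
      · refine ⟨?_, Finset.notMem_empty _⟩
        intro e
        have := congrArg Fin.val e
        simp only [hu0, Fin.val_mk] at this
        omega
      · refine ⟨?_, Finset.notMem_empty _⟩
        intro e
        have := congrArg Fin.val e
        simp only [hu0, Fin.val_mk] at this
        omega
    · have : Finset.univ \ ((∅ : Finset (Fin N)) ∪ insert u0 ∅) = Finset.univ.erase u0 := by
        ext x
        simp only [Finset.mem_sdiff, Finset.mem_univ, Finset.mem_union, Finset.mem_insert,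
          Finset.mem_erase, Finset.notMem_empty, true_and, not_or, and_true]
        tauto
      rw [this, Finset.card_erase_of_mem (Finset.mem_univ _), Finset.card_univ, hcardV]
      omega

end BalanceAux

theorem statement_6 (k n : ℕ) (h : max (2 * k) 1 ≤ n) :
    ∃ G : SimpleGraph (Fin n), balA G = (k : ℤ) ∧ balI G = (k : ℤ) := by
  have hkn : 2 * k ≤ n := le_trans (le_max_left _ _) h
  have hn : 1 ≤ n := le_trans (le_max_right _ _) h
  exact ⟨BalanceAux.MG n k, BalanceAux.balA_eq hkn hn, BalanceAux.balI_eq hkn hn⟩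
end

section
/- Let G be a finite simple graph with maximum degree Δ and let v be a vertex of G of degree deg(v). Then b^I_g(G) ≤ b^A_g(G − v) + 2Δ + deg(v), and b^A_g(G) ≥ b^I_g(G − v) − 2Δ − deg(v), where G − v is the graph obtained from G by deleting the vertex v and all edges incident to it. -/
open SimpleGraph

/-!
Compare the game on `G` with Impish to move against the game on `G - v` with Admirable to
move. Whatever vertex `d` Impish takes first, relabelling the remaining vertices by the
transposition `(d v)` turns the rest of the game into a game on the vertices of `G - v`, whose
score differs from that of `G - v` by at most `2Δ + deg v` in every final position, because
moving one vertex between the sides changes the score by at most its degree. A pointwise change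
of the score by at most `c` changes the game value by at most `c`. The second inequality is the
same argument with the players' roles exchanged.
-/

open Finset

namespace SimpleGraph

variable {V W : Type*} (G : SimpleGraph V)

def edgesBetween (A B : Set V) : Set (Sym2 V) :=
  {e ∈ G.edgeSet | ∃ u ∈ A, ∃ w ∈ B, e = s(u, w)}

theorem bscore_eq_ncard (A B : Set V) :
    bscore G A B = (G.edgesBetween A B).ncard -
      (G.edgesBetween A A ∪ G.edgesBetween B B).ncard := by
  rw [bscore, Set.sep_or]
  rfl

theorem edgesBetween_comm (A B : Set V) : G.edgesBetween A B = G.edgesBetween B A := by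
  ext e
  constructor <;>
  · rintro ⟨he, u, hu, w, hw, rfl⟩
    exact ⟨he, w, hw, u, hu, Sym2.eq_swap⟩

theorem edgesBetween_mono {A A' B B' : Set V} (hA : A ⊆ A') (hB : B ⊆ B') :
    G.edgesBetween A B ⊆ G.edgesBetween A' B' := by
  rintro e ⟨he, u, hu, w, hw, rfl⟩
  exact ⟨he, u, hA hu, w, hB hw, rfl⟩

theorem edgesBetween_insert_subset (x : V) (A B : Set V) :
    G.edgesBetween (insert x A) (insert x B) ⊆ G.edgesBetween A B ∪ G.incidenceSet x := by
  rintro e ⟨he, u, rfl | hu, w, hw, rfl⟩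
  · exact Or.inr ⟨he, Sym2.mem_mk_left _ _⟩
  rcases hw with rfl | hw
  · exact Or.inr ⟨he, Sym2.mem_mk_right _ _⟩
  · exact Or.inl ⟨he, u, hu, w, hw, rfl⟩

theorem image_edgesBetween_comap (φ : W → V) (A B : Set W) :
    Sym2.map φ '' (G.comap φ).edgesBetween A B = G.edgesBetween (φ '' A) (φ '' B) := by
  ext e
  constructor
  · rintro ⟨_, ⟨he, u, hu, w, hw, rfl⟩, rfl⟩
    exact ⟨he, φ u, ⟨u, hu, rfl⟩, φ w, ⟨w, hw, rfl⟩, rfl⟩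
  · rintro ⟨he, _, ⟨u, hu, rfl⟩, _, ⟨w, hw, rfl⟩, rfl⟩
    exact ⟨s(u, w), ⟨he, u, hu, w, hw, rfl⟩, rfl⟩

theorem bscore_comm (A B : Set V) : bscore G A B = bscore G B A := by
  rw [bscore_eq_ncard, bscore_eq_ncard, edgesBetween_comm, Set.union_comm]

theorem bscore_comap {φ : W → V} (hφ : Function.Injective φ) (A B : Set W) :
    bscore (G.comap φ) A B = bscore G (φ '' A) (φ '' B) := by
  have hφ₂ := Sym2.map.injective hφ
  simp only [bscore_eq_ncard, ← image_edgesBetween_comap, ← Set.image_union,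
    Set.ncard_image_of_injective _ hφ₂]

theorem ncard_incidenceSet [Fintype V] [DecidableRel G.Adj] (x : V) :
    (G.incidenceSet x).ncard = G.degree x := by
  classical
  rw [← coe_incidenceFinset, Set.ncard_coe_finset, card_incidenceFinset_eq_degree]

theorem abs_bscore_insert_right_sub_le [Fintype V] [DecidableRel G.Adj] (x : V) (A B : Set V) :
    |bscore G A (insert x B) - bscore G A B| ≤ G.degree x := by
  set I := G.incidenceSet x
  have hcross₁ : G.edgesBetween A B ⊆ G.edgesBetween A (insert x B) :=
    G.edgesBetween_mono subset_rfl (Set.subset_insert x B)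
  have hcross₂ : G.edgesBetween A (insert x B) ⊆ G.edgesBetween A B ∪ I :=
    (G.edgesBetween_mono (Set.subset_insert x A) subset_rfl).trans
      (G.edgesBetween_insert_subset x A B)
  have hinner₁ : G.edgesBetween A A ∪ G.edgesBetween B B ⊆
      G.edgesBetween A A ∪ G.edgesBetween (insert x B) (insert x B) :=
    Set.union_subset_union_right _ (G.edgesBetween_mono (Set.subset_insert x B)
      (Set.subset_insert x B))
  have hinner₂ : G.edgesBetween A A ∪ G.edgesBetween (insert x B) (insert x B) ⊆
      (G.edgesBetween A A ∪ G.edgesBetween B B) ∪ I := by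
    rw [Set.union_assoc]
    exact Set.union_subset_union_right _ (G.edgesBetween_insert_subset x B B)
  have h₁ := Set.ncard_le_ncard hcross₁
  have h₂ := (Set.ncard_le_ncard hcross₂).trans (Set.ncard_union_le _ I)
  have h₃ := Set.ncard_le_ncard hinner₁
  have h₄ := (Set.ncard_le_ncard hinner₂).trans (Set.ncard_union_le _ I)
  rw [ncard_incidenceSet] at h₂ h₄
  rw [bscore_eq_ncard, bscore_eq_ncard, abs_le]
  constructor <;> omega

theorem abs_bscore_insert_left_sub_le [Fintype V] [DecidableRel G.Adj] (x : V) (A B : Set V) :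
    |bscore G (insert x A) B - bscore G A B| ≤ G.degree x := by
  rw [bscore_comm G (insert x A), bscore_comm G A]
  exact G.abs_bscore_insert_right_sub_le x B A

end SimpleGraph

namespace BalanceGame

variable {V W : Type*} [DecidableEq V] [DecidableEq W]

/-- The balance game with `k` moves left on the free vertices `F`: `f A B` scores the final
position in which Admirable has taken `A ⊆ F` and Impish `B ⊆ F`, so the moves already made
are absorbed into `f`. -/
def value : ℕ → (Finset V → Finset V → ℤ) → Bool → Finset V → ℤ
  | 0, f, _, _ => f ∅ ∅
  | k + 1, f, t, F =>
    if h : F.Nonempty then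
      if t then F.inf' h fun u => value k (fun A B => f (insert u A) B) false (F.erase u)
      else F.sup' h fun u => value k (fun A B => f A (insert u B)) true (F.erase u)
    else f ∅ ∅

theorem value_le_value_add {c : ℤ} :
    ∀ {k : ℕ} {f g : Finset V → Finset V → ℤ} {t : Bool} {F : Finset V},
      (∀ A ⊆ F, ∀ B ⊆ F, Disjoint A B → f A B ≤ g A B + c) →
        value k f t F ≤ value k g t F + c
  | 0, _, _, _, _, h => h ∅ (empty_subset _) ∅ (empty_subset _) (disjoint_empty_left _)
  | k + 1, f, g, t, F, h => by
    unfold value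
    split_ifs with hF
    · obtain ⟨u, hu, hmin⟩ := exists_mem_eq_inf' hF
        fun u => value k (fun A B => g (insert u A) B) false (F.erase u)
      rw [hmin]
      refine (inf'_le _ hu).trans (value_le_value_add fun A hA B hB hAB => ?_)
      exact h _ (insert_subset hu (hA.trans (erase_subset u F))) _ (hB.trans (erase_subset u F))
        (disjoint_insert_left.2 ⟨fun huB => notMem_erase u F (hB huB), hAB⟩)
    · refine sup'_le _ _ fun u hu => (value_le_value_add fun A hA B hB hAB => ?_).trans
        (add_le_add_left (le_sup' (fun u => value k (fun A B => g A (insert u B)) true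
          (F.erase u)) hu) c)
      exact h _ (hA.trans (erase_subset u F)) _ (insert_subset hu (hB.trans (erase_subset u F)))
        (disjoint_insert_right.2 ⟨fun huA => notMem_erase u F (hA huA), hAB⟩)
    · exact h ∅ (empty_subset _) ∅ (empty_subset _) (disjoint_empty_left _)

theorem value_map (e : V ↪ W) :
    ∀ {k : ℕ} {f : Finset W → Finset W → ℤ} {t : Bool} {F : Finset V},
      value k (fun A B => f (A.map e) (B.map e)) t F = value k f t (F.map e)
  | 0, _, _, _ => by simp [value]
  | k + 1, f, t, F => by
    unfold value
    by_cases hF : F.Nonempty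
    · rw [dif_pos hF, dif_pos (hF.map)]
      cases t
      · simp only [Bool.false_eq_true, if_false, sup'_map]
        refine sup'_congr hF rfl fun u _ => ?_
        simp only [Function.comp, map_insert, ← map_erase]
        exact value_map e (f := fun A B => f A (insert (e u) B))
      · simp only [if_true, inf'_map]
        refine inf'_congr hF rfl fun u _ => ?_
        simp only [Function.comp, map_insert, ← map_erase]
        exact value_map e (f := fun A B => f (insert (e u) A) B)
    · rw [dif_neg hF, dif_neg (by simpa using hF)]
      simp

theorem gameVal_eq_value [Fintype V] (G : SimpleGraph V) :
    ∀ (k : ℕ) (t : Bool) (S0 S1 : Finset V), gameVal G k t S0 S1 =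
      value k (fun A B => bscore G ↑(S0 ∪ A) ↑(S1 ∪ B)) t (univ \ (S0 ∪ S1)) := by
  -- `gameVal` decides equality with `Classical.decEq`
  obtain rfl : ‹DecidableEq V› = Classical.decEq V := Subsingleton.elim _ _
  let : DecidableEq V := Classical.decEq V
  intro k
  induction k with
  | zero => simp [gameVal, value]
  | succ k ih =>
    intro t S0 S1
    have hfree : ∀ u, (univ \ (S0 ∪ S1)).erase u = univ \ (insert u S0 ∪ S1) ∧
        (univ \ (S0 ∪ S1)).erase u = univ \ (S0 ∪ insert u S1) := fun u => by
      simp only [insert_union, union_insert, sdiff_insert, and_self]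
    rw [gameVal, value]
    split_ifs with hF
    · refine inf'_congr hF rfl fun u _ => ?_
      rw [ih, (hfree u).1]
      simp only [union_insert, insert_union]
    · refine sup'_congr hF rfl fun u _ => ?_
      rw [ih, (hfree u).2]
      simp only [union_insert, insert_union]
    · simp

theorem gameVal_empty [Fintype V] (G : SimpleGraph V) (k : ℕ) (t : Bool) :
    gameVal G k t ∅ ∅ = value k (fun A B : Finset V => bscore G ↑A ↑B) t univ := by
  simp [gameVal_eq_value]

theorem gameVal_induce [Fintype V] (G : SimpleGraph V) (s : Set V) [Fintype s]
    [DecidablePred (· ∈ s)] (k : ℕ) (t : Bool) :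
    gameVal (G.induce s) k t ∅ ∅ =
      value k (fun A B : Finset V => bscore G ↑A ↑B) t (univ.filter (· ∈ s)) := by
  rw [gameVal_empty, ← univ_map_subtype, ← value_map]
  simp only [coe_map, Function.Embedding.coe_subtype]
  exact congrArg (value k · t univ) (funext₂ fun A B => G.bscore_comap Subtype.val_injective _ _)

theorem map_swap_of_notMem {d v : V} {A : Finset V} (hd : d ∉ A) (hv : v ∉ A) :
    A.map (Equiv.swap d v).toEmbedding = A := by
  ext x
  simp only [mem_map_equiv, Equiv.symm_swap]
  by_cases hxd : x = d
  · subst hxd; simp [hd, hv]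
  by_cases hxv : x = v
  · subst hxv; simp [hd, hv]
  rw [Equiv.swap_apply_of_ne_of_ne hxd hxv]

theorem map_swap_of_mem {d v : V} {A : Finset V} (hd : d ∈ A) (hv : v ∉ A) :
    A.map (Equiv.swap d v).toEmbedding = insert v (A.erase d) := by
  ext x
  simp only [mem_map_equiv, Equiv.symm_swap, mem_insert, mem_erase]
  by_cases hxd : x = d
  · subst hxd; simp [hd, hv, ne_of_mem_of_not_mem hd hv]
  by_cases hxv : x = v
  · subst hxv; simp [hd]
  rw [Equiv.swap_apply_of_ne_of_ne hxd hxv]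
  simp [hxd, hxv]

theorem map_swap_univ_erase [Fintype V] (d v : V) :
    (univ.erase v).map (Equiv.swap d v).toEmbedding = univ.erase d := by
  rw [map_erase, map_univ_equiv]
  simp

section Lipschitz

variable (f : Finset V → Finset V → ℤ) (δ : V → ℤ)
  (hA : ∀ x A B, |f (insert x A) B - f A B| ≤ δ x)
  (hB : ∀ x A B, |f A (insert x B) - f A B| ≤ δ x)
include hA hB

theorem abs_map_swap_insert_right_sub_le {d v : V} {A B : Finset V} (hvA : v ∉ A)
    (hvB : v ∉ B) (hAB : Disjoint A B) :
    |f (A.map (Equiv.swap d v).toEmbedding) (insert d (B.map (Equiv.swap d v).toEmbedding))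
      - f A B| ≤ 2 * δ d + δ v := by
  have hδ : ∀ x, 0 ≤ δ x := fun x => (abs_nonneg _).trans (hA x ∅ ∅)
  have hd := hδ d
  have hv := hδ v
  by_cases hdA : d ∈ A
  · rw [map_swap_of_mem hdA hvA, map_swap_of_notMem (disjoint_left.1 hAB hdA) hvB]
    rw [show f A B = f (insert d (A.erase d)) B by rw [insert_erase hdA]]
    have h₁ := abs_le.1 (hA v (A.erase d) (insert d B))
    have h₂ := abs_le.1 (hB d (A.erase d) B)
    have h₃ := abs_le.1 (hA d (A.erase d) B)
    rw [abs_le]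
    constructor <;> linarith
  by_cases hdB : d ∈ B
  · rw [map_swap_of_notMem hdA hvA, map_swap_of_mem hdB hvB, insert_comm, insert_erase hdB]
    linarith [hB v A B]
  · rw [map_swap_of_notMem hdA hvA, map_swap_of_notMem hdB hvB]
    linarith [hB d A B]

theorem abs_map_swap_insert_left_sub_le {d v : V} {A B : Finset V} (hvA : v ∉ A)
    (hvB : v ∉ B) (hAB : Disjoint A B) :
    |f (insert d (A.map (Equiv.swap d v).toEmbedding)) (B.map (Equiv.swap d v).toEmbedding)
      - f A B| ≤ 2 * δ d + δ v :=
  abs_map_swap_insert_right_sub_le (fun A B => f B A) δ (fun x A B => hB x B A)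
    (fun x A B => hA x B A) hvB hvA hAB.symm

variable [Fintype V] {D : ℤ} (hD : ∀ x, δ x ≤ D)
include hD

theorem value_succ_false_le (v : V) (m : ℕ) :
    value (m + 1) f false univ ≤ value m f true (univ.erase v) + (2 * D + δ v) := by
  rw [value, dif_pos ⟨v, mem_univ v⟩, if_neg Bool.false_ne_true]
  refine sup'_le _ _ fun d _ => ?_
  rw [← map_swap_univ_erase d v, ← value_map]
  refine (value_le_value_add (g := f) (c := 2 * δ d + δ v) fun A hAF B hBF hAB => ?_).trans
    (by linarith [hD d])
  have := abs_le.1 <| abs_map_swap_insert_right_sub_le f δ hA hB (d := d)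
    (fun h => notMem_erase v univ (hAF h)) (fun h => notMem_erase v univ (hBF h)) hAB
  linarith

theorem sub_le_value_succ_true (v : V) (m : ℕ) :
    value m f false (univ.erase v) - (2 * D + δ v) ≤ value (m + 1) f true univ := by
  rw [value, dif_pos ⟨v, mem_univ v⟩, if_pos rfl]
  refine le_inf' _ _ fun d _ => ?_
  rw [← map_swap_univ_erase d v, ← value_map, sub_le_iff_le_add]
  refine (value_le_value_add (c := 2 * δ d + δ v) fun A hAF B hBF hAB => ?_).trans
    (by linarith [hD d])
  have := abs_le.1 <| abs_map_swap_insert_left_sub_le f δ hA hB (d := d)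
    (fun h => notMem_erase v univ (hAF h)) (fun h => notMem_erase v univ (hBF h)) hAB
  linarith

end Lipschitz

end BalanceGame

open BalanceGame

theorem statement_8 {V : Type*} [Fintype V] [DecidableEq V] (G : SimpleGraph V)
    [DecidableRel G.Adj] (v : V) :
    balI G ≤ balA (G.induce {w | w ≠ v}) + 2 * (G.maxDegree : ℤ) + (G.degree v : ℤ) ∧
    balI (G.induce {w | w ≠ v}) - 2 * (G.maxDegree : ℤ) - (G.degree v : ℤ) ≤ balA G := by
  set f : Finset V → Finset V → ℤ := fun A B => bscore G ↑A ↑B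
  have hA : ∀ x A B, |f (insert x A) B - f A B| ≤ G.degree x := fun x A B => by
    simpa [f] using G.abs_bscore_insert_left_sub_le x A B
  have hB : ∀ x A B, |f A (insert x B) - f A B| ≤ G.degree x := fun x A B => by
    simpa [f] using G.abs_bscore_insert_right_sub_le x A B
  have hD : ∀ x, (G.degree x : ℤ) ≤ G.maxDegree := fun x => by
    exact_mod_cast G.degree_le_maxDegree x
  obtain ⟨m, hm⟩ : ∃ m, Fintype.card V = m + 1 :=
    Nat.exists_eq_add_one.2 (Fintype.card_pos_iff.2 ⟨v⟩)
  have hG : ∀ t, gameVal G (Fintype.card V) t ∅ ∅ = value (m + 1) f t univ := fun t => by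
    rw [gameVal_empty, hm]
  have hGv : ∀ t, gameVal (G.induce {w | w ≠ v}) (Fintype.card {w | w ≠ v}) t ∅ ∅ =
      value m f t (univ.erase v) := fun t => by
    rw [gameVal_induce, Set.card_ne_eq, hm, Nat.add_sub_cancel]
    simp only [Set.mem_ofPred_eq, filter_ne']
    rfl
  rw [balI, balA, balI, balA, hG, hG, hGv, hGv]
  constructor
  · linarith [value_succ_false_le f _ hA hB hD v m]
  · linarith [sub_le_value_succ_true f _ hA hB hD v m]
end
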